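/- arXiv:1210.1848 — 6 statements merged into one kernel-verified Lean document; each statement's English description precedes it below -/
import Mathlib

section
/- Let (E₁,‖·‖₁) and (E₂,‖·‖₂) be random normed modules over K with base (Ω,𝓕,P), and let T : E₁ → E₂ be a K-linear operator. Then T is a.s. bounded (i.e., there exists ξ ∈ L⁰₊(𝓕) with ‖Tx‖₂ ≤ ξ·‖x‖₁ a.e. for all x ∈ E₁) if and only if T is a module homomorphism over L⁰(𝓕,K) and is continuous for the (ε,λ)-topologies, i.e., ‖xₙ − x‖₁ → 0 in probability P implies ‖Txₙ − Tx‖₂ → 0 in probability P. Moreover, in this case the a.e.-smallest ξ ∈ L⁰₊(𝓕) with ‖Tx‖₂ ≤ ξ‖x‖₁ a.e. for all x exists (denoted ‖T‖), and ‖T‖ is the a.e.-least upper bound of the family {‖Tx‖₂ : x ∈ E₁, ‖x‖₁ ≤ 1}, i.e., ‖Tx‖₂ ≤ ‖T‖ a.e. whenever ‖x‖₁ ≤ 1 a.e., and any η ∈ L⁰₊(𝓕) with ‖Tx‖₂ ≤ η a.e. for all x with ‖x‖₁ ≤ 1 a.e. satisfies ‖T‖ ≤ η a.e. -/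
/-!
A bounded `T` commutes with every idempotent `e` of `L⁰`: the bound forces the norms of
`(1 - e) • T (e • x)` and `e • T ((1 - e) • x)` to vanish. Hence `T` commutes with simple
functions, and, since the bound controls `‖T ((ξ - ξₙ) • x)‖`, with every a.e. limit of them;
the bound also transports convergence in probability.

Conversely, for an `L⁰`-linear `T` the family `{‖T x‖ : ‖x‖ ≤ 1}` is upward directed (glue two
vectors along the set where the first image norm dominates). Maximising `f ↦ ∫ arctan f` over
such a family yields an increasing sequence in it whose pointwise supremum dominates every member
a.e. Continuity in probability forbids this supremum to be infinite on a set `A` of positive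
measure: `𝟙_A (1 + ‖T yₙ‖)⁻¹ • yₙ` tends to `0`, while the norm of its image tends to `1` on `A`.
The finite supremum is the least bound on the unit ball, and by homogeneity an a.s. bound.
-/

open MeasureTheory Filter Set Topology Real

theorem DirectedOn.exists_monotone_ge {α : Type*} [Preorder α] {s : Set α}
    (hs : DirectedOn (· ≤ ·) s) {x : ℕ → α} (hx : ∀ n, x n ∈ s) :
    ∃ y : ℕ → α, (∀ n, y n ∈ s) ∧ Monotone y ∧ ∀ n, x n ≤ y n := by
  choose f hfs hf₁ hf₂ using hs
  let y : ℕ → s := fun n => n.rec ⟨x 0, hx 0⟩ fun k yk => ⟨f yk.1 yk.2 (x (k + 1)) (hx _), hfs ..⟩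
  refine ⟨fun n => (y n).1, fun n => (y n).2, monotone_nat_of_le_succ fun n => hf₁ .., ?_⟩
  rintro (_ | n)
  · exact le_rfl
  · exact hf₂ ..

theorem MeasureTheory.TendstoInMeasure.of_ae_abs_le_mul {Ω : Type*} [MeasurableSpace Ω]
    {P : Measure Ω} [IsFiniteMeasure P] {f g : ℕ → Ω → ℝ} {ξ : Ω → ℝ}
    (hf : TendstoInMeasure P f atTop fun _ => 0) (hg : ∀ n, AEStronglyMeasurable (g n) P)
    (hgf : ∀ n, ∀ᵐ ω ∂P, |g n ω| ≤ ξ ω * |f n ω|) : TendstoInMeasure P g atTop fun _ => 0 := by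
  intro ε hε
  refine tendsto_of_subseq_tendsto fun ns hns => ?_
  obtain ⟨ms, -, hms⟩ :=
    TendstoInMeasure.exists_seq_tendsto_ae (f := fun k => f (ns k)) fun δ hδ => (hf δ hδ).comp hns
  refine ⟨ms, tendstoInMeasure_of_tendsto_ae (fun k => hg _) ?_ ε hε⟩
  filter_upwards [hms, ae_all_iff.2 fun k => hgf (ns (ms k))] with ω hω hle
  simpa using squeeze_zero_norm hle (by simpa using hω.abs.const_mul (ξ ω))

abbrev Module.ofSMulAxioms {R M : Type*} [Semiring R] [AddCommGroup M] [SMul R M]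
    (smul_add : ∀ (r : R) (x y : M), r • (x + y) = r • x + r • y)
    (add_smul : ∀ (r s : R) (x : M), (r + s) • x = r • x + s • x)
    (mul_smul : ∀ (r s : R) (x : M), (r * s) • x = r • s • x)
    (one_smul : ∀ x : M, (1 : R) • x = x) : Module R M where
  smul_add := smul_add
  add_smul := add_smul
  mul_smul := mul_smul
  one_smul := one_smul
  zero_smul x := by simpa using add_smul 0 0 x
  smul_zero r := by simpa using smul_add r 0 0

theorem Real.abs_arctan_le (x : ℝ) : |arctan x| ≤ π / 2 :=
  abs_le.2 ⟨(neg_pi_div_two_lt_arctan x).le, (arctan_lt_pi_div_two x).le⟩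

theorem Real.bddAbove_range_arctan {ι : Type*} (g : ι → ℝ) :
    BddAbove (range fun i => arctan (g i)) :=
  ⟨π / 2, forall_mem_range.2 fun _ => (arctan_lt_pi_div_two _).le⟩

namespace MeasureTheory.AEEqFun

section CommRing

variable {α γ : Type*} [MeasurableSpace α] {μ : Measure α} [TopologicalSpace γ] [CommRing γ]
  [IsTopologicalRing γ]

instance instNatCast : NatCast (α →ₘ[μ] γ) := ⟨fun n => const α n⟩

instance instIntCast : IntCast (α →ₘ[μ] γ) := ⟨fun n => const α n⟩

instance instCommRing : CommRing (α →ₘ[μ] γ) :=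
  toGerm_injective.commRing toGerm zero_toGerm one_toGerm add_toGerm mul_toGerm neg_toGerm
    sub_toGerm (fun _ _ => smul_toGerm _ _) (fun _ _ => smul_toGerm _ _) pow_toGerm
    (fun _ => rfl) (fun _ => rfl)

end CommRing

variable {Ω : Type*} [MeasurableSpace Ω] {P : Measure Ω}

theorem ae_monotone {β : Type*} [TopologicalSpace β] [Preorder β] {y : ℕ → Ω →ₘ[P] β}
    (hy : Monotone y) : ∀ᵐ ω ∂P, Monotone fun n => y n ω := by
  filter_upwards [ae_all_iff.2 fun n => coeFn_le.2 (hy (Nat.le_succ n))] with ω hω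
  exact monotone_nat_of_le_succ hω

theorem isLUB_mk_iSup {F : Set (Ω →ₘ[P] ℝ)} {y : ℕ → Ω →ₘ[P] ℝ} (hyF : ∀ n, y n ∈ F)
    (hF : ∀ f ∈ F, ∀ᵐ ω ∂P, ∀ b < f ω, ∃ n, b < y n ω)
    (hbdd : ∀ᵐ ω ∂P, BddAbove (range fun n => y n ω)) :
    IsLUB F (AEEqFun.mk (μ := P) (fun ω => ⨆ n, y n ω)
      (Measurable.iSup fun n => (y n).measurable).aestronglyMeasurable) := by
  refine ⟨fun f hf => coeFn_le.1 ?_, fun η hη => coeFn_le.1 ?_⟩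
  · filter_upwards [hF f hf, hbdd, coeFn_mk (β := ℝ) _ _] with ω hfω hbω hmk
    rw [hmk]
    exact le_of_forall_lt fun b hb => let ⟨n, hn⟩ := hfω b hb; hn.trans_le (le_ciSup hbω n)
  · filter_upwards [ae_all_iff.2 fun n => coeFn_le.2 (hη (hyF n)), coeFn_mk (β := ℝ) _ _]
      with ω hω hmk
    rw [hmk]
    exact ciSup_le hω

theorem ae_bddAbove_range_of_mem_upperBounds {F : Set (Ω →ₘ[P] ℝ)} {η : Ω →ₘ[P] ℝ}
    (hη : η ∈ upperBounds F) {y : ℕ → Ω →ₘ[P] ℝ} (hy : ∀ n, y n ∈ F) :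
    ∀ᵐ ω ∂P, BddAbove (range fun n => y n ω) := by
  filter_upwards [ae_all_iff.2 fun n => coeFn_le.2 (hη (hy n))] with ω h
  exact ⟨η ω, forall_mem_range.2 h⟩

variable (P) in
noncomputable def indicatorOne (β : Type*) [TopologicalSpace β] [Zero β] [One β] {A : Set Ω}
    (hA : MeasurableSet A) : Ω →ₘ[P] β :=
  mk (A.indicator 1) (stronglyMeasurable_one.indicator hA).aestronglyMeasurable

theorem coeFn_indicatorOne {β : Type*} [TopologicalSpace β] [Zero β] [One β] {A : Set Ω}
    (hA : MeasurableSet A) : ⇑(indicatorOne P β hA) =ᵐ[P] A.indicator 1 :=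
  coeFn_mk _ _

theorem isIdempotentElem_indicatorOne {β : Type*} [TopologicalSpace β] [MulZeroOneClass β]
    [ContinuousMul β] {A : Set Ω} (hA : MeasurableSet A) :
    IsIdempotentElem (indicatorOne P β hA) := by
  refine ext ?_
  filter_upwards [coeFn_mul (indicatorOne P β hA) (indicatorOne P β hA),
    coeFn_indicatorOne (β := β) hA] with ω hmul h
  rw [hmul, Pi.mul_apply, h]
  by_cases hω : ω ∈ A <;> simp [hω]

variable {K : Type*} [RCLike K]

variable (K) in
noncomputable def mkOfReal (g : Ω → ℝ) (hg : AEStronglyMeasurable g P) : Ω →ₘ[P] K :=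
  mk (fun ω => (g ω : K)) (RCLike.continuous_ofReal.comp_aestronglyMeasurable hg)

variable (K) in
theorem ae_norm_mkOfReal {g : Ω → ℝ} (hg : AEStronglyMeasurable g P) :
    ∀ᵐ ω ∂P, ‖mkOfReal K g hg ω‖ = |g ω| := by
  filter_upwards [coeFn_mk (β := K) _ _] with ω h
  rw [mkOfReal, h, RCLike.norm_ofReal]

section FiniteMeasure

variable [IsFiniteMeasure P]

theorem integrable_arctan (f : Ω →ₘ[P] ℝ) : MeasureTheory.Integrable (fun ω => arctan (f ω)) P :=
  .of_bound (continuous_arctan.comp_aestronglyMeasurable f.aestronglyMeasurable) (π / 2)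
    (.of_forall fun _ => abs_arctan_le _)

theorem integrable_iSup_arctan (y : ℕ → Ω →ₘ[P] ℝ) :
    MeasureTheory.Integrable (fun ω => ⨆ n, arctan (y n ω)) P := by
  refine .of_bound
    (Measurable.iSup fun n => measurable_arctan.comp (y n).measurable).aestronglyMeasurable (π / 2) (.of_forall fun ω => abs_le.2 ⟨?_, ciSup_le fun n => (arctan_lt_pi_div_two _).le⟩)
  exact (neg_pi_div_two_lt_arctan _).le.trans
    (le_ciSup (bddAbove_range_arctan fun n => y n ω) 0)

theorem ae_arctan_le_iSup_arctan {y w : ℕ → Ω →ₘ[P] ℝ} {f : Ω →ₘ[P] ℝ} (hy : Monotone y)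
    (hyw : ∀ n, y n ≤ w n) (hfw : ∀ n, f ≤ w n)
    (hw : ∀ n, ∫ ω, arctan (w n ω) ∂P ≤ ∫ ω, ⨆ k, arctan (y k ω) ∂P) :
    ∀ᵐ ω ∂P, arctan (f ω) ≤ ⨆ k, arctan (y k ω) := by
  set Φ : Ω → ℝ := fun ω => ⨆ k, arctan (y k ω)
  have hΦ : ∀ᵐ ω ∂P, Tendsto (fun k => arctan (y k ω)) atTop (𝓝 (Φ ω)) := by
    filter_upwards [ae_monotone hy] with ω hω
    exact tendsto_atTop_ciSup (arctan_strictMono.monotone.comp hω)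
      (bddAbove_range_arctan fun k => y k ω)
  have hmax : ∀ n, MeasureTheory.Integrable (fun ω => arctan (max (y n ω) (f ω))) P := fun n =>
    (integrable_arctan (y n ⊔ f)).congr (by filter_upwards [coeFn_sup (y n) f] with ω h; rw [h])
  have hlim : Tendsto (fun n => ∫ ω, arctan (max (y n ω) (f ω)) ∂P) atTop
      (𝓝 (∫ ω, max (Φ ω) (arctan (f ω)) ∂P)) := by
    refine tendsto_integral_of_dominated_convergence (fun _ => π / 2)
      (fun n => (hmax n).1) (integrable_const _)
      (fun n => .of_forall fun ω => abs_arctan_le _) ?_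
    filter_upwards [hΦ] with ω h
    simpa only [arctan_strictMono.monotone.map_max] using h.max tendsto_const_nhds
  have hle : ∫ ω, max (Φ ω) (arctan (f ω)) ∂P ≤ ∫ ω, Φ ω ∂P := by
    refine le_of_tendsto' hlim fun n =>
      (integral_mono_ae (hmax n) (integrable_arctan _) ?_).trans (hw n)
    filter_upwards [coeFn_le.2 (hyw n), coeFn_le.2 (hfw n)] with ω h₁ h₂
    exact arctan_strictMono.monotone (max_le h₁ h₂)
  have hint := (integrable_iSup_arctan y).sup (integrable_arctan f)
  have heq : Φ =ᵐ[P] fun ω => max (Φ ω) (arctan (f ω)) :=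
    (integral_eq_iff_of_ae_le (integrable_iSup_arctan y) hint
      (.of_forall fun ω => le_max_left _ _)).1
      ((integral_mono (integrable_iSup_arctan y) hint fun ω => le_max_left _ _).antisymm hle)
  filter_upwards [heq] with ω h
  exact (le_max_right _ _).trans_eq h.symm

theorem exists_monotone_ae_le_iSup {F : Set (Ω →ₘ[P] ℝ)} (hne : F.Nonempty)
    (hdir : DirectedOn (· ≤ ·) F) :
    ∃ y : ℕ → Ω →ₘ[P] ℝ, (∀ n, y n ∈ F) ∧ Monotone y ∧
      ∀ f ∈ F, ∀ᵐ ω ∂P, ∀ b < f ω, ∃ n, b < y n ω := by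
  set I : (Ω →ₘ[P] ℝ) → ℝ := fun f => ∫ ω, arctan (f ω) ∂P
  have hI : Monotone I := fun f g hfg => integral_mono_ae (integrable_arctan f)
    (integrable_arctan g) (by
      filter_upwards [coeFn_le.2 hfg] with ω h
      exact arctan_strictMono.monotone h)
  have hbdd : BddAbove (I '' F) := ⟨∫ _, π / 2 ∂P, forall_mem_image.2 fun f _ =>
    integral_mono (integrable_arctan f) (integrable_const _) fun ω => (arctan_lt_pi_div_two _).le⟩
  obtain ⟨u, -, hu, huI⟩ := exists_seq_tendsto_sSup (hne.image I) hbdd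
  choose x hxF hxu using huI
  obtain ⟨y, hyF, hy, hxy⟩ := hdir.exists_monotone_ge hxF
  have hIF : ∀ g ∈ F, I g ≤ ∫ ω, ⨆ k, arctan (y k ω) ∂P := by
    refine fun g hg => (le_csSup hbdd (mem_image_of_mem I hg)).trans (le_of_tendsto' hu fun n => ?_)
    rw [← hxu n]
    exact (hI (hxy n)).trans (integral_mono (integrable_arctan _) (integrable_iSup_arctan y)
      fun ω => le_ciSup (bddAbove_range_arctan fun k => y k ω) n)
  refine ⟨y, hyF, hy, fun f hf => ?_⟩
  choose w hwF hyw hfw using fun n => hdir (y n) (hyF n) f hf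
  filter_upwards [ae_arctan_le_iSup_arctan hy hyw hfw fun n => hIF _ (hwF n)] with ω hω b hb
  obtain ⟨n, hn⟩ := exists_lt_of_lt_ciSup ((arctan_strictMono hb).trans_le hω)
  exact ⟨n, arctan_strictMono.lt_iff_lt.1 hn⟩

theorem exists_isLUB_of_directedOn {F : Set (Ω →ₘ[P] ℝ)} (hne : F.Nonempty)
    (hdir : DirectedOn (· ≤ ·) F)
    (hbdd : ∀ y : ℕ → Ω →ₘ[P] ℝ, (∀ n, y n ∈ F) → Monotone y →
      ∀ᵐ ω ∂P, BddAbove (range fun n => y n ω)) :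
    ∃ ξ, IsLUB F ξ := by
  obtain ⟨y, hyF, hy, hF⟩ := exists_monotone_ae_le_iSup hne hdir
  exact ⟨_, isLUB_mk_iSup hyF hF (hbdd y hyF hy)⟩

end FiniteMeasure

end MeasureTheory.AEEqFun

section RandomNormedModule

open AEEqFun

variable {Ω : Type*} [MeasurableSpace Ω] {P : Measure Ω} {E₁ E₂ : Type*}

def IsAEBound (n₁ : E₁ → Ω →ₘ[P] ℝ) (n₂ : E₂ → Ω →ₘ[P] ℝ) (T : E₁ → E₂) (ξ : Ω →ₘ[P] ℝ) :
    Prop :=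
  ∀ x, ∀ᵐ ω ∂P, n₂ (T x) ω ≤ ξ ω * n₁ x ω

def normsImageUnitBall (n₁ : E₁ → Ω →ₘ[P] ℝ) (n₂ : E₂ → Ω →ₘ[P] ℝ) (T : E₁ → E₂) :
    Set (Ω →ₘ[P] ℝ) :=
  (fun x => n₂ (T x)) '' {x | ∀ᵐ ω ∂P, n₁ x ω ≤ 1}

variable {n₁ : E₁ → Ω →ₘ[P] ℝ} {n₂ : E₂ → Ω →ₘ[P] ℝ}

theorem mem_upperBounds_normsImageUnitBall {T : E₁ → E₂} {η : Ω →ₘ[P] ℝ} :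
    η ∈ upperBounds (normsImageUnitBall n₁ n₂ T) ↔
      ∀ x, (∀ᵐ ω ∂P, n₁ x ω ≤ 1) → ∀ᵐ ω ∂P, n₂ (T x) ω ≤ η ω := by
  rw [mem_upperBounds, normsImageUnitBall, forall_mem_image]
  exact forall₂_congr fun _ _ => coeFn_le.symm

theorem IsAEBound.mem_upperBounds {T : E₁ → E₂} {ξ : Ω →ₘ[P] ℝ} (hT : IsAEBound n₁ n₂ T ξ)
    (hξ : ∀ᵐ ω ∂P, 0 ≤ ξ ω) : ξ ∈ upperBounds (normsImageUnitBall n₁ n₂ T) :=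
  mem_upperBounds_normsImageUnitBall.2 fun x hx => by
    filter_upwards [hT x, hx, hξ] with ω h h₁ h₀
    exact h.trans (mul_le_of_le_one_right h₀ h₁)

variable {K : Type*} [RCLike K]

section Homogeneous

variable {E : Type*} [AddCommGroup E] [Module (Ω →ₘ[P] K) E]

variable (K) in
def IsL0Homogeneous (n : E → Ω →ₘ[P] ℝ) : Prop :=
  ∀ (c : Ω →ₘ[P] K) (x : E), ∀ᵐ ω ∂P, n (c • x) ω = ‖c ω‖ * n x ω

variable {n : E → Ω →ₘ[P] ℝ}

theorem IsL0Homogeneous.ae_map_zero (hn : IsL0Homogeneous K n) : ∀ᵐ ω ∂P, n 0 ω = 0 := by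
  filter_upwards [hn 0 0, coeFn_zero (β := K) (μ := P)] with ω h h₀
  rwa [smul_zero, h₀, Pi.zero_apply, norm_zero, zero_mul] at h

theorem IsL0Homogeneous.ae_indicatorOne_smul_add (hn : IsL0Homogeneous K n) {A : Set Ω}
    (hA : MeasurableSet A) (u v : E) :
    ∀ᵐ ω ∂P, (ω ∈ A → n (indicatorOne P K hA • u + (1 - indicatorOne P K hA) • v) ω = n u ω) ∧
      (ω ∉ A → n (indicatorOne P K hA • u + (1 - indicatorOne P K hA) • v) ω = n v ω) := by
  set e := indicatorOne P K hA
  have he : IsIdempotentElem e := isIdempotentElem_indicatorOne hA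
  set w := e • u + (1 - e) • v
  have hew : e • w = e • u := by
    rw [smul_add, smul_smul, smul_smul, he.eq, he.mul_one_sub_self, zero_smul (Ω →ₘ[P] K) v,
      add_zero]
  have hew' : (1 - e) • w = (1 - e) • v := by
    rw [smul_add, smul_smul, smul_smul, he.one_sub_mul_self, he.one_sub.eq,
      zero_smul (Ω →ₘ[P] K) u, zero_add]
  filter_upwards [hn e w, hn e u, hn (1 - e) w, hn (1 - e) v, coeFn_indicatorOne (β := K) hA,
    coeFn_sub 1 e, coeFn_one (β := K) (μ := P)] with ω h₁ h₂ h₃ h₄ he₁ he₂ h1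
  rw [hew, h₂, he₁] at h₁
  rw [hew', h₄, he₂, Pi.sub_apply, h1, he₁] at h₃
  constructor <;> intro hω <;> simp_all

end Homogeneous

variable [AddCommGroup E₁] [Module (Ω →ₘ[P] K) E₁]

theorem map_zero_mem_normsImageUnitBall (hn₁ : IsL0Homogeneous K n₁) (T : E₁ → E₂) :
    n₂ (T 0) ∈ normsImageUnitBall n₁ n₂ T :=
  ⟨0, by filter_upwards [hn₁.ae_map_zero] with ω h; exact h.trans_le zero_le_one, rfl⟩

theorem ae_nonneg_of_mem_upperBounds (hn₁ : IsL0Homogeneous K n₁)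
    (hn₂pos : ∀ y, ∀ᵐ ω ∂P, 0 ≤ n₂ y ω) {T : E₁ → E₂} {η : Ω →ₘ[P] ℝ}
    (hη : η ∈ upperBounds (normsImageUnitBall n₁ n₂ T)) : ∀ᵐ ω ∂P, 0 ≤ η ω := by
  filter_upwards [coeFn_le.2 (hη (map_zero_mem_normsImageUnitBall hn₁ T)), hn₂pos (T 0)]
    with ω h h₀
  exact h₀.trans h

variable [AddCommGroup E₂]

def SeqContinuousInProbability (n₁ : E₁ → Ω →ₘ[P] ℝ) (n₂ : E₂ → Ω →ₘ[P] ℝ) (T : E₁ → E₂) :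
    Prop :=
  ∀ (x : ℕ → E₁) (x₀ : E₁),
    TendstoInMeasure P (fun n ω => n₁ (x n - x₀) ω) atTop (fun _ => 0) →
    TendstoInMeasure P (fun n ω => n₂ (T (x n) - T x₀) ω) atTop (fun _ => 0)

theorem SeqContinuousInProbability.exists_ae_tendsto_smul [IsFiniteMeasure P] {T : E₁ →+ E₂}
    (hcont : SeqContinuousInProbability n₁ n₂ T) (hn₁ : IsL0Homogeneous K n₁)
    (hn₁pos : ∀ x, ∀ᵐ ω ∂P, 0 ≤ n₁ x ω) {c : ℕ → Ω →ₘ[P] K} {x : ℕ → E₁}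
    (hc : ∀ᵐ ω ∂P, Tendsto (fun n => ‖c n ω‖) atTop (𝓝 0))
    (hx : ∀ n, ∀ᵐ ω ∂P, n₁ (x n) ω ≤ 1) :
    ∃ ns : ℕ → ℕ, StrictMono ns ∧
      ∀ᵐ ω ∂P, Tendsto (fun i => n₂ (T (c (ns i) • x (ns i))) ω) atTop (𝓝 0) := by
  have hz : TendstoInMeasure P (fun n ω => n₁ (c n • x n - 0) ω) atTop fun _ => 0 := by
    refine tendstoInMeasure_of_tendsto_ae (fun n => (n₁ _).aestronglyMeasurable) ?_
    filter_upwards [hc, ae_all_iff.2 fun n => hn₁ (c n) (x n), ae_all_iff.2 hx,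
      ae_all_iff.2 fun n => hn₁pos (x n)] with ω hω h₁ h₂ h₃
    refine squeeze_zero (fun n => ?_) (fun n => ?_) hω
    · rw [sub_zero, h₁]
      exact mul_nonneg (norm_nonneg _) (h₃ n)
    · rw [sub_zero, h₁]
      exact mul_le_of_le_one_right (norm_nonneg _) (h₂ n)
  simpa using (hcont _ 0 hz).exists_seq_tendsto_ae

variable [Module (Ω →ₘ[P] K) E₂]

theorem directedOn_normsImageUnitBall (hn₁ : IsL0Homogeneous K n₁)
    (hn₂ : IsL0Homogeneous K n₂) {T : E₁ →+ E₂}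
    (hT : ∀ (c : Ω →ₘ[P] K) (x : E₁), T (c • x) = c • T x) :
    DirectedOn (· ≤ ·) (normsImageUnitBall n₁ n₂ T) := by
  rintro _ ⟨a, ha, rfl⟩ _ ⟨b, hb, rfl⟩
  set A := {ω | n₂ (T b) ω ≤ n₂ (T a) ω}
  have hA : MeasurableSet A := measurableSet_le (n₂ (T b)).measurable (n₂ (T a)).measurable
  set e := indicatorOne P K hA
  have hz₂ := hn₂.ae_indicatorOne_smul_add hA (T a) (T b)
  rw [← hT, ← hT, ← map_add] at hz₂
  refine ⟨_, ⟨e • a + (1 - e) • b, ?_, rfl⟩, coeFn_le.1 ?_, coeFn_le.1 ?_⟩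
  · show ∀ᵐ ω ∂P, _ ≤ 1
    filter_upwards [hn₁.ae_indicatorOne_smul_add hA a b, ha, hb] with ω h h₁ h₂
    by_cases hω : ω ∈ A
    · exact (h.1 hω).trans_le h₁
    · exact (h.2 hω).trans_le h₂
  · filter_upwards [hz₂] with ω h
    by_cases hω : ω ∈ A
    · exact (h.1 hω).ge
    · exact (not_le.1 hω).le.trans (h.2 hω).ge
  · filter_upwards [hz₂] with ω h
    by_cases hω : ω ∈ A
    · exact hω.trans (h.1 hω).ge
    · exact (h.2 hω).ge

section Bounded

variable {T : E₁ →+ E₂} {ξ : Ω →ₘ[P] ℝ}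

namespace IsAEBound

theorem smul_map_smul_eq_zero (hT : IsAEBound n₁ n₂ T ξ) (hn₁ : IsL0Homogeneous K n₁)
    (hn₂ : IsL0Homogeneous K n₂) (hn₂pos : ∀ y, ∀ᵐ ω ∂P, 0 ≤ n₂ y ω)
    (hn₂def : ∀ y, (∀ᵐ ω ∂P, n₂ y ω = 0) → y = 0) {a b : Ω →ₘ[P] K} (hab : a * b = 0)
    (x : E₁) : a • T (b • x) = 0 := by
  have hab' : ∀ᵐ ω ∂P, ‖a ω‖ * ‖b ω‖ = 0 := by
    filter_upwards [coeFn_mul a b, coeFn_zero (β := K) (μ := P)] with ω hmul h₀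
    rw [← norm_mul, ← Pi.mul_apply (f := ⇑a), ← hmul, hab, h₀, Pi.zero_apply, norm_zero]
  apply hn₂def
  filter_upwards [hn₂ a (T (b • x)), hT (b • x), hn₁ b x, hn₂pos (a • T (b • x)), hab']
    with ω h₁ h₂ h₃ h₄ h₅
  refine le_antisymm ?_ h₄
  calc n₂ (a • T (b • x)) ω = ‖a ω‖ * n₂ (T (b • x)) ω := h₁
    _ ≤ ‖a ω‖ * (ξ ω * n₁ (b • x) ω) := by gcongr
    _ = ξ ω * (‖a ω‖ * ‖b ω‖) * n₁ x ω := by rw [h₃]; ring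
    _ = 0 := by rw [h₅]; ring

theorem map_smul_of_isIdempotentElem (hT : IsAEBound n₁ n₂ T ξ) (hn₁ : IsL0Homogeneous K n₁)
    (hn₂ : IsL0Homogeneous K n₂) (hn₂pos : ∀ y, ∀ᵐ ω ∂P, 0 ≤ n₂ y ω)
    (hn₂def : ∀ y, (∀ᵐ ω ∂P, n₂ y ω = 0) → y = 0) {e : Ω →ₘ[P] K} (he : IsIdempotentElem e)
    (x : E₁) : T (e • x) = e • T x := by
  have h₁ : (1 - e) • T (e • x) = 0 :=
    hT.smul_map_smul_eq_zero hn₁ hn₂ hn₂pos hn₂def he.one_sub_mul_self x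
  have h₂ : e • T ((1 - e) • x) = 0 :=
    hT.smul_map_smul_eq_zero hn₁ hn₂ hn₂pos hn₂def he.mul_one_sub_self x
  calc T (e • x) = e • T (e • x) + (1 - e) • T (e • x) := by
        rw [← add_smul, add_sub_cancel, one_smul]
    _ = e • T (e • x) + e • T ((1 - e) • x) := by rw [h₁, h₂]
    _ = e • T x := by rw [← smul_add, ← map_add, ← add_smul, add_sub_cancel, one_smul]

theorem map_smul_mk_simpleFunc (hT : IsAEBound n₁ n₂ T ξ) (hn₁ : IsL0Homogeneous K n₁)
    (hn₂ : IsL0Homogeneous K n₂) (hn₂pos : ∀ y, ∀ᵐ ω ∂P, 0 ≤ n₂ y ω)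
    (hn₂def : ∀ y, (∀ᵐ ω ∂P, n₂ y ω = 0) → y = 0)
    (hT_const : ∀ (c : K) (x : E₁),
      T ((const Ω c : Ω →ₘ[P] K) • x) = (const Ω c : Ω →ₘ[P] K) • T x)
    (f : SimpleFunc Ω K) (x : E₁) :
    T ((mk f f.aestronglyMeasurable : Ω →ₘ[P] K) • x) =
      (mk f f.aestronglyMeasurable : Ω →ₘ[P] K) • T x := by
  induction f using SimpleFunc.induction generalizing x with
  | @const c s hs =>
    set f := SimpleFunc.piecewise s hs (SimpleFunc.const Ω c) (SimpleFunc.const Ω 0)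
    have hf : (AEEqFun.mk f f.aestronglyMeasurable : Ω →ₘ[P] K) =
        const Ω c * indicatorOne P K hs := by
      refine ext ?_
      filter_upwards [coeFn_mk (μ := P) f f.aestronglyMeasurable,
        coeFn_mul (const Ω c) (indicatorOne P K hs), coeFn_const (μ := P) Ω c,
        coeFn_indicatorOne (β := K) hs] with ω h₁ h₂ h₃ h₄
      rw [h₁, h₂, Pi.mul_apply, h₃, h₄]
      by_cases hω : ω ∈ s <;> simp [f, hω]
    rw [hf, mul_smul, hT_const, hT.map_smul_of_isIdempotentElem hn₁ hn₂ hn₂pos hn₂def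
      (isIdempotentElem_indicatorOne hs), mul_smul]
  | @add f g _ hf hg =>
    have hfg : (AEEqFun.mk ⇑(f + g) (f + g).aestronglyMeasurable : Ω →ₘ[P] K) =
        AEEqFun.mk f f.aestronglyMeasurable + AEEqFun.mk g g.aestronglyMeasurable := rfl
    rw [hfg, add_smul, map_add, hf, hg, add_smul]

theorem map_smul_of_tendsto (hT : IsAEBound n₁ n₂ T ξ) (hn₁ : IsL0Homogeneous K n₁)
    (hn₂ : IsL0Homogeneous K n₂) (hn₂pos : ∀ y, ∀ᵐ ω ∂P, 0 ≤ n₂ y ω)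
    (hn₂def : ∀ y, (∀ᵐ ω ∂P, n₂ y ω = 0) → y = 0)
    (hn₂tri : ∀ y z, ∀ᵐ ω ∂P, n₂ (y + z) ω ≤ n₂ y ω + n₂ z ω) {c : ℕ → Ω →ₘ[P] K}
    {c₀ : Ω →ₘ[P] K} (hc : ∀ n x, T (c n • x) = c n • T x)
    (hlim : ∀ᵐ ω ∂P, Tendsto (fun n => c n ω) atTop (𝓝 (c₀ ω))) (x : E₁) :
    T (c₀ • x) = c₀ • T x := by
  have hle : ∀ n, ∀ᵐ ω ∂P, n₂ (T (c₀ • x) - c₀ • T x) ω ≤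
      ‖c₀ ω - c n ω‖ * (ξ ω * n₁ x ω + n₂ (T x) ω) := fun n => by
    have hsplit : T (c₀ • x) - c₀ • T x = T ((c₀ - c n) • x) + (c n - c₀) • T x := by
      rw [sub_smul, map_sub, hc, sub_smul]
      abel
    filter_upwards [hn₂tri (T ((c₀ - c n) • x)) ((c n - c₀) • T x), hT ((c₀ - c n) • x),
      hn₁ (c₀ - c n) x, hn₂ (c n - c₀) (T x), coeFn_sub c₀ (c n), coeFn_sub (c n) c₀]
      with ω htri hb h₁ h₂ hs₁ hs₂
    rw [hsplit]
    rw [h₁, hs₁, Pi.sub_apply] at hb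
    rw [h₂, hs₂, Pi.sub_apply, norm_sub_rev] at htri
    linarith
  rw [← sub_eq_zero]
  apply hn₂def
  filter_upwards [ae_all_iff.2 hle, hlim, hn₂pos (T (c₀ • x) - c₀ • T x)] with ω hω hlimω hpos
  refine le_antisymm (ge_of_tendsto' (x := atTop) ?_ hω) hpos
  simpa using
    ((tendsto_const_nhds (x := c₀ ω)).sub hlimω).norm.mul_const (ξ ω * n₁ x ω + n₂ (T x) ω)

theorem map_smul (hT : IsAEBound n₁ n₂ T ξ) (hn₁ : IsL0Homogeneous K n₁)
    (hn₂ : IsL0Homogeneous K n₂) (hn₂pos : ∀ y, ∀ᵐ ω ∂P, 0 ≤ n₂ y ω)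
    (hn₂def : ∀ y, (∀ᵐ ω ∂P, n₂ y ω = 0) → y = 0)
    (hn₂tri : ∀ y z, ∀ᵐ ω ∂P, n₂ (y + z) ω ≤ n₂ y ω + n₂ z ω)
    (hT_const : ∀ (c : K) (x : E₁),
      T ((const Ω c : Ω →ₘ[P] K) • x) = (const Ω c : Ω →ₘ[P] K) • T x)
    (c : Ω →ₘ[P] K) (x : E₁) : T (c • x) = c • T x := by
  set s := c.stronglyMeasurable.approx
  refine hT.map_smul_of_tendsto hn₁ hn₂ hn₂pos hn₂def hn₂tri
    (fun n => hT.map_smul_mk_simpleFunc hn₁ hn₂ hn₂pos hn₂def hT_const (s n)) ?_ x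
  filter_upwards [ae_all_iff.2 fun n => coeFn_mk (μ := P) (s n) (s n).aestronglyMeasurable]
    with ω h
  simpa only [h] using c.stronglyMeasurable.tendsto_approx ω

theorem seqContinuousInProbability [IsFiniteMeasure P] (hT : IsAEBound n₁ n₂ T ξ)
    (hn₁pos : ∀ x, ∀ᵐ ω ∂P, 0 ≤ n₁ x ω) (hn₂pos : ∀ y, ∀ᵐ ω ∂P, 0 ≤ n₂ y ω) :
    SeqContinuousInProbability n₁ n₂ T := by
  intro x x₀ h
  simp only [← map_sub]
  refine TendstoInMeasure.of_ae_abs_le_mul (ξ := ξ) h (fun n => (n₂ _).aestronglyMeasurable)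
    fun n => ?_
  filter_upwards [hT (x n - x₀), hn₁pos (x n - x₀), hn₂pos (T (x n - x₀))] with ω h h₁ h₂
  rwa [abs_of_nonneg h₁, abs_of_nonneg h₂]

end IsAEBound

end Bounded

section L0Linear

variable {T : E₁ →+ E₂}

theorem ae_le_mul_of_mem_upperBounds (hn₁ : IsL0Homogeneous K n₁)
    (hn₂ : IsL0Homogeneous K n₂) (hT : ∀ (c : Ω →ₘ[P] K) (x : E₁), T (c • x) = c • T x)
    {η : Ω →ₘ[P] ℝ} (hη : η ∈ upperBounds (normsImageUnitBall n₁ n₂ T)) {x : E₁} {t : Ω → ℝ}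
    (ht : Measurable t) (ht₀ : ∀ᵐ ω ∂P, 0 < t ω) (hxt : ∀ᵐ ω ∂P, n₁ x ω ≤ t ω) :
    ∀ᵐ ω ∂P, n₂ (T x) ω ≤ t ω * η ω := by
  set c : Ω →ₘ[P] K := mkOfReal K _ ht.inv.aestronglyMeasurable
  have hc : ∀ᵐ ω ∂P, ‖c ω‖ = (t ω)⁻¹ := by
    filter_upwards [ae_norm_mkOfReal K ht.inv.aestronglyMeasurable, ht₀] with ω h h₀
    rw [h, Pi.inv_apply, abs_of_pos (inv_pos.2 h₀)]
  have hcx := mem_upperBounds_normsImageUnitBall.1 hη (c • x) (by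
    filter_upwards [hn₁ c x, hc, ht₀, hxt] with ω h₁ h₂ h₀ h
    rwa [h₁, h₂, inv_mul_le_one₀ h₀])
  filter_upwards [hcx, hn₂ c (T x), hc, ht₀] with ω h h₂ h₃ h₀
  rwa [hT, h₂, h₃, inv_mul_le_iff₀ h₀] at h

theorem isAEBound_of_mem_upperBounds (hn₁ : IsL0Homogeneous K n₁)
    (hn₂ : IsL0Homogeneous K n₂) (hn₁pos : ∀ x, ∀ᵐ ω ∂P, 0 ≤ n₁ x ω)
    (hT : ∀ (c : Ω →ₘ[P] K) (x : E₁), T (c • x) = c • T x) {η : Ω →ₘ[P] ℝ}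
    (hη : η ∈ upperBounds (normsImageUnitBall n₁ n₂ T)) : IsAEBound n₁ n₂ T η := by
  intro x
  have hε : ∀ k : ℕ, ∀ᵐ ω ∂P, n₂ (T x) ω ≤ (n₁ x ω + 1 / (k + 1)) * η ω := fun k =>
    ae_le_mul_of_mem_upperBounds hn₁ hn₂ hT hη ((n₁ x).measurable.add_const _)
      (by filter_upwards [hn₁pos x] with ω h; positivity)
      (.of_forall fun ω => le_add_of_nonneg_right (by positivity))
  filter_upwards [ae_all_iff.2 hε] with ω hω
  refine ge_of_tendsto' (x := atTop) ?_ hω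
  simpa [mul_comm] using
    ((tendsto_const_nhds (x := n₁ x ω)).add tendsto_one_div_add_atTop_nhds_zero_nat).mul_const
      (η ω)

theorem SeqContinuousInProbability.ae_bddAbove [IsFiniteMeasure P]
    (hcont : SeqContinuousInProbability n₁ n₂ T) (hn₁ : IsL0Homogeneous K n₁)
    (hn₂ : IsL0Homogeneous K n₂) (hn₁pos : ∀ x, ∀ᵐ ω ∂P, 0 ≤ n₁ x ω)
    (hn₂pos : ∀ y, ∀ᵐ ω ∂P, 0 ≤ n₂ y ω) (hT : ∀ (c : Ω →ₘ[P] K) (x : E₁), T (c • x) = c • T x)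
    {y : ℕ → Ω →ₘ[P] ℝ} (hy : ∀ n, y n ∈ normsImageUnitBall n₁ n₂ T) (hmono : Monotone y) :
    ∀ᵐ ω ∂P, BddAbove (range fun n => y n ω) := by
  choose x hx hxy using hy
  replace hxy : ∀ n, n₂ (T (x n)) = y n := hxy
  set A := {ω | ¬BddAbove (range fun n => y n ω)}
  have hA : MeasurableSet A := (measurableSet_bddAbove_range fun n => (y n).measurable).compl
  set r : ℕ → Ω → ℝ := fun n => A.indicator fun ω => (1 + |y n ω|)⁻¹
  have hrm : ∀ n, Measurable (r n) := fun n =>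
    ((y n).measurable.abs.const_add 1).inv.indicator hA
  set c := fun n => mkOfReal K (r n) (hrm n).aestronglyMeasurable
  have hc : ∀ n, ∀ᵐ ω ∂P, ‖c n ω‖ = r n ω := fun n => by
    filter_upwards [ae_norm_mkOfReal K (hrm n).aestronglyMeasurable] with ω h
    rw [h, abs_of_nonneg (indicator_nonneg (fun ω _ => by positivity) ω)]
  have hr : ∀ᵐ ω ∂P, Tendsto (fun n => r n ω) atTop (𝓝 0) := by
    filter_upwards [ae_monotone hmono] with ω hω
    by_cases hωA : ω ∈ A
    · simp only [r, indicator_of_mem hωA]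
      exact tendsto_inv_atTop_zero.comp (tendsto_atTop_add_const_left _ 1
        (tendsto_abs_atTop_atTop.comp (tendsto_atTop_atTop_of_monotone' hω hωA)))
    · simp only [r, indicator_of_notMem hωA, tendsto_const_nhds]
  obtain ⟨ns, hns, hlim⟩ := hcont.exists_ae_tendsto_smul hn₁ hn₁pos (c := c)
    (by filter_upwards [hr, ae_all_iff.2 hc] with ω h h'; simpa only [h'] using h) hx
  filter_upwards [hlim, hr, ae_all_iff.2 fun n => hn₂ (c n) (T (x n)), ae_all_iff.2 hc,
    ae_all_iff.2 fun n => hxy n ▸ hn₂pos (T (x n))] with ω hω hrω h₂ hcω hpos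
  by_contra hωA
  -- on `A`, `‖T (c n • x n)‖ = yₙ / (1 + yₙ) = 1 - r n`, which tends to `1`
  have hval : ∀ n, n₂ (T (c n • x n)) ω = 1 - r n ω := fun n => by
    have : 1 + y n ω ≠ 0 := by linarith [hpos n]
    rw [hT, h₂, hcω, hxy]
    simp only [r, indicator_of_mem (show ω ∈ A from hωA), abs_of_nonneg (hpos n)]
    field_simp
    ring
  refine one_ne_zero (tendsto_nhds_unique ?_ hω)
  simpa [hval] using (tendsto_const_nhds (x := (1 : ℝ))).sub (hrω.comp hns.tendsto_atTop)

theorem exists_isLUB_normsImageUnitBall [IsFiniteMeasure P] (hn₁ : IsL0Homogeneous K n₁)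
    (hn₂ : IsL0Homogeneous K n₂) (hT : ∀ (c : Ω →ₘ[P] K) (x : E₁), T (c • x) = c • T x)
    (hbdd : ∀ y : ℕ → Ω →ₘ[P] ℝ, (∀ n, y n ∈ normsImageUnitBall n₁ n₂ T) → Monotone y →
      ∀ᵐ ω ∂P, BddAbove (range fun n => y n ω)) :
    ∃ ξT, IsLUB (normsImageUnitBall n₁ n₂ T) ξT :=
  exists_isLUB_of_directedOn ⟨_, map_zero_mem_normsImageUnitBall hn₁ T⟩
    (directedOn_normsImageUnitBall hn₁ hn₂ hT) hbdd

end L0Linear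

end RandomNormedModule

theorem stmt0_general
    {Ω K E₁ E₂ : Type*} [MeasurableSpace Ω] {P : Measure Ω} [IsProbabilityMeasure P]
    [RCLike K]
    [AddCommGroup E₁] [SMul (Ω →ₘ[P] K) E₁]
    [AddCommGroup E₂] [SMul (Ω →ₘ[P] K) E₂]
    -- `E₁` is a left module over `L⁰(𝓕,K)`
    (hmod₁a : ∀ (ξ : Ω →ₘ[P] K) (x y : E₁), ξ • (x + y) = ξ • x + ξ • y)
    (hmod₁b : ∀ (ξ η : Ω →ₘ[P] K) (x : E₁), (ξ + η) • x = ξ • x + η • x)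
    (hmod₁c : ∀ (ξ η : Ω →ₘ[P] K) (x : E₁), (ξ * η) • x = ξ • (η • x))
    (hmod₁d : ∀ x : E₁, (1 : Ω →ₘ[P] K) • x = x)
    -- `E₂` is a left module over `L⁰(𝓕,K)`
    (hmod₂a : ∀ (ξ : Ω →ₘ[P] K) (x y : E₂), ξ • (x + y) = ξ • x + ξ • y)
    (hmod₂b : ∀ (ξ η : Ω →ₘ[P] K) (x : E₂), (ξ + η) • x = ξ • x + η • x)
    (hmod₂c : ∀ (ξ η : Ω →ₘ[P] K) (x : E₂), (ξ * η) • x = ξ • (η • x))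
    (hmod₂d : ∀ x : E₂, (1 : Ω →ₘ[P] K) • x = x)
    -- `n₁` is an `L⁰`-norm on `E₁`
    (n₁ : E₁ → Ω →ₘ[P] ℝ)
    (hn₁pos : ∀ x, ∀ᵐ ω ∂P, 0 ≤ n₁ x ω)
    (hn₁hom : ∀ (ξ : Ω →ₘ[P] K) (x : E₁), ∀ᵐ ω ∂P, n₁ (ξ • x) ω = ‖ξ ω‖ * n₁ x ω)
    -- `n₂` is an `L⁰`-norm on `E₂`
    (n₂ : E₂ → Ω →ₘ[P] ℝ)
    (hn₂pos : ∀ x, ∀ᵐ ω ∂P, 0 ≤ n₂ x ω)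
    (hn₂def : ∀ x, (∀ᵐ ω ∂P, n₂ x ω = 0) → x = 0)
    (hn₂tri : ∀ x y, ∀ᵐ ω ∂P, n₂ (x + y) ω ≤ n₂ x ω + n₂ y ω)
    (hn₂hom : ∀ (ξ : Ω →ₘ[P] K) (x : E₂), ∀ᵐ ω ∂P, n₂ (ξ • x) ω = ‖ξ ω‖ * n₂ x ω)
    -- `T` is a `K`-linear operator
    (T : E₁ → E₂)
    (hT_add : ∀ x y, T (x + y) = T x + T y)
    (hT_smul : ∀ (c : K) (x : E₁),
      T ((AEEqFun.const Ω c : Ω →ₘ[P] K) • x) = (AEEqFun.const Ω c : Ω →ₘ[P] K) • T x) :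
    -- conclusion
    ((∃ ξ : Ω →ₘ[P] ℝ, (∀ᵐ ω ∂P, 0 ≤ ξ ω) ∧ ∀ x, ∀ᵐ ω ∂P, n₂ (T x) ω ≤ ξ ω * n₁ x ω) ↔
      ((∀ (ξ : Ω →ₘ[P] K) (x : E₁), T (ξ • x) = ξ • T x) ∧
        ∀ (x : ℕ → E₁) (x₀ : E₁),
          TendstoInMeasure P (fun n ω => n₁ (x n - x₀) ω) atTop (fun _ => (0 : ℝ)) →
          TendstoInMeasure P (fun n ω => n₂ (T (x n) - T x₀) ω) atTop (fun _ => (0 : ℝ))))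
    ∧
    ((∃ ξ : Ω →ₘ[P] ℝ, (∀ᵐ ω ∂P, 0 ≤ ξ ω) ∧ ∀ x, ∀ᵐ ω ∂P, n₂ (T x) ω ≤ ξ ω * n₁ x ω) →
      ∃ ξT : Ω →ₘ[P] ℝ, (∀ᵐ ω ∂P, 0 ≤ ξT ω)
        ∧ (∀ x, ∀ᵐ ω ∂P, n₂ (T x) ω ≤ ξT ω * n₁ x ω)
        ∧ (∀ η : Ω →ₘ[P] ℝ, (∀ᵐ ω ∂P, 0 ≤ η ω) →
            (∀ x, ∀ᵐ ω ∂P, n₂ (T x) ω ≤ η ω * n₁ x ω) → ∀ᵐ ω ∂P, ξT ω ≤ η ω)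
        ∧ (∀ x, (∀ᵐ ω ∂P, n₁ x ω ≤ 1) → ∀ᵐ ω ∂P, n₂ (T x) ω ≤ ξT ω)
        ∧ (∀ η : Ω →ₘ[P] ℝ, (∀ᵐ ω ∂P, 0 ≤ η ω) →
            (∀ x, (∀ᵐ ω ∂P, n₁ x ω ≤ 1) → ∀ᵐ ω ∂P, n₂ (T x) ω ≤ η ω) →
            ∀ᵐ ω ∂P, ξT ω ≤ η ω)) := by
  let _ : Module (Ω →ₘ[P] K) E₁ := .ofSMulAxioms hmod₁a hmod₁b hmod₁c hmod₁d
  let _ : Module (Ω →ₘ[P] K) E₂ := .ofSMulAxioms hmod₂a hmod₂b hmod₂c hmod₂d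
  let T' : E₁ →+ E₂ := AddMonoidHom.mk' T hT_add
  have hhom : ∀ {ξ}, IsAEBound n₁ n₂ T ξ → ∀ (c : Ω →ₘ[P] K) (x : E₁), T (c • x) = c • T x :=
    fun hξ => IsAEBound.map_smul (T := T') hξ hn₁hom hn₂hom hn₂pos hn₂def hn₂tri hT_smul
  refine ⟨⟨fun ⟨ξ, _, hξ⟩ => ⟨hhom hξ, IsAEBound.seqContinuousInProbability (T := T') hξ
    hn₁pos hn₂pos⟩, fun ⟨hT, hcont⟩ => ?_⟩, fun ⟨ξ, hξ0, hξ⟩ => ?_⟩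
  · obtain ⟨ξT, hξT⟩ := exists_isLUB_normsImageUnitBall (T := T') hn₁hom hn₂hom hT fun _ =>
      SeqContinuousInProbability.ae_bddAbove (T := T') hcont hn₁hom hn₂hom hn₁pos hn₂pos hT
    exact ⟨ξT, ae_nonneg_of_mem_upperBounds hn₁hom hn₂pos hξT.1,
      isAEBound_of_mem_upperBounds (T := T') hn₁hom hn₂hom hn₁pos hT hξT.1⟩
  · obtain ⟨ξT, hξT⟩ := exists_isLUB_normsImageUnitBall (T := T') hn₁hom hn₂hom (hhom hξ)
      fun _ hy _ =>
        AEEqFun.ae_bddAbove_range_of_mem_upperBounds (IsAEBound.mem_upperBounds hξ hξ0) hy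
    exact ⟨ξT, ae_nonneg_of_mem_upperBounds hn₁hom hn₂pos hξT.1,
      isAEBound_of_mem_upperBounds (T := T') hn₁hom hn₂hom hn₁pos (hhom hξ) hξT.1,
      fun η hη0 hη => AEEqFun.coeFn_le.2 (hξT.2 (IsAEBound.mem_upperBounds hη hη0)),
      mem_upperBounds_normsImageUnitBall.1 hξT.1,
      fun η _ hη => AEEqFun.coeFn_le.2 (hξT.2 (mem_upperBounds_normsImageUnitBall.2 hη))⟩

/-- For RN modules `(E₁,n₁)`, `(E₂,n₂)` over `K` with base `(Ω,𝓕,P)` and a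
`K`-linear operator `T : E₁ → E₂`: `T` is a.s. bounded iff `T` is an `L⁰(𝓕,K)`-module
homomorphism which is continuous for the `(ε,λ)`-topologies; moreover, in this case the
a.e.-smallest a.s. bound `‖T‖` exists and is the a.e.-least upper bound of
`{‖Tx‖₂ : ‖x‖₁ ≤ 1}`. -/
theorem stmt0
    {Ω K E₁ E₂ : Type*} [MeasurableSpace Ω] {P : Measure Ω} [IsProbabilityMeasure P]
    [RCLike K]
    [AddCommGroup E₁] [SMul (Ω →ₘ[P] K) E₁]
    [AddCommGroup E₂] [SMul (Ω →ₘ[P] K) E₂]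
    -- `E₁` is a left module over `L⁰(𝓕,K)`
    (hmod₁a : ∀ (ξ : Ω →ₘ[P] K) (x y : E₁), ξ • (x + y) = ξ • x + ξ • y)
    (hmod₁b : ∀ (ξ η : Ω →ₘ[P] K) (x : E₁), (ξ + η) • x = ξ • x + η • x)
    (hmod₁c : ∀ (ξ η : Ω →ₘ[P] K) (x : E₁), (ξ * η) • x = ξ • (η • x))
    (hmod₁d : ∀ x : E₁, (1 : Ω →ₘ[P] K) • x = x)
    -- `E₂` is a left module over `L⁰(𝓕,K)`
    (hmod₂a : ∀ (ξ : Ω →ₘ[P] K) (x y : E₂), ξ • (x + y) = ξ • x + ξ • y)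
    (hmod₂b : ∀ (ξ η : Ω →ₘ[P] K) (x : E₂), (ξ + η) • x = ξ • x + η • x)
    (hmod₂c : ∀ (ξ η : Ω →ₘ[P] K) (x : E₂), (ξ * η) • x = ξ • (η • x))
    (hmod₂d : ∀ x : E₂, (1 : Ω →ₘ[P] K) • x = x)
    -- `n₁` is an `L⁰`-norm on `E₁`
    (n₁ : E₁ → Ω →ₘ[P] ℝ)
    (hn₁pos : ∀ x, ∀ᵐ ω ∂P, 0 ≤ n₁ x ω)
    (hn₁def : ∀ x, (∀ᵐ ω ∂P, n₁ x ω = 0) → x = 0)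
    (hn₁tri : ∀ x y, ∀ᵐ ω ∂P, n₁ (x + y) ω ≤ n₁ x ω + n₁ y ω)
    (hn₁hom : ∀ (ξ : Ω →ₘ[P] K) (x : E₁), ∀ᵐ ω ∂P, n₁ (ξ • x) ω = ‖ξ ω‖ * n₁ x ω)
    -- `n₂` is an `L⁰`-norm on `E₂`
    (n₂ : E₂ → Ω →ₘ[P] ℝ)
    (hn₂pos : ∀ x, ∀ᵐ ω ∂P, 0 ≤ n₂ x ω)
    (hn₂def : ∀ x, (∀ᵐ ω ∂P, n₂ x ω = 0) → x = 0)
    (hn₂tri : ∀ x y, ∀ᵐ ω ∂P, n₂ (x + y) ω ≤ n₂ x ω + n₂ y ω)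
    (hn₂hom : ∀ (ξ : Ω →ₘ[P] K) (x : E₂), ∀ᵐ ω ∂P, n₂ (ξ • x) ω = ‖ξ ω‖ * n₂ x ω)
    -- `T` is a `K`-linear operator
    (T : E₁ → E₂)
    (hT_add : ∀ x y, T (x + y) = T x + T y)
    (hT_smul : ∀ (c : K) (x : E₁),
      T ((AEEqFun.const Ω c : Ω →ₘ[P] K) • x) = (AEEqFun.const Ω c : Ω →ₘ[P] K) • T x) :
    -- conclusion
    ((∃ ξ : Ω →ₘ[P] ℝ, (∀ᵐ ω ∂P, 0 ≤ ξ ω) ∧ ∀ x, ∀ᵐ ω ∂P, n₂ (T x) ω ≤ ξ ω * n₁ x ω) ↔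
      ((∀ (ξ : Ω →ₘ[P] K) (x : E₁), T (ξ • x) = ξ • T x) ∧
        ∀ (x : ℕ → E₁) (x₀ : E₁),
          TendstoInMeasure P (fun n ω => n₁ (x n - x₀) ω) atTop (fun _ => (0 : ℝ)) →
          TendstoInMeasure P (fun n ω => n₂ (T (x n) - T x₀) ω) atTop (fun _ => (0 : ℝ))))
    ∧
    ((∃ ξ : Ω →ₘ[P] ℝ, (∀ᵐ ω ∂P, 0 ≤ ξ ω) ∧ ∀ x, ∀ᵐ ω ∂P, n₂ (T x) ω ≤ ξ ω * n₁ x ω) →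
      ∃ ξT : Ω →ₘ[P] ℝ, (∀ᵐ ω ∂P, 0 ≤ ξT ω)
        ∧ (∀ x, ∀ᵐ ω ∂P, n₂ (T x) ω ≤ ξT ω * n₁ x ω)
        ∧ (∀ η : Ω →ₘ[P] ℝ, (∀ᵐ ω ∂P, 0 ≤ η ω) →
            (∀ x, ∀ᵐ ω ∂P, n₂ (T x) ω ≤ η ω * n₁ x ω) → ∀ᵐ ω ∂P, ξT ω ≤ η ω)
        ∧ (∀ x, (∀ᵐ ω ∂P, n₁ x ω ≤ 1) → ∀ᵐ ω ∂P, n₂ (T x) ω ≤ ξT ω)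
        ∧ (∀ η : Ω →ₘ[P] ℝ, (∀ᵐ ω ∂P, 0 ≤ η ω) →
            (∀ x, (∀ᵐ ω ∂P, n₁ x ω ≤ 1) → ∀ᵐ ω ∂P, n₂ (T x) ω ≤ η ω) →
            ∀ᵐ ω ∂P, ξT ω ≤ η ω)) :=
  stmt0_general hmod₁a hmod₁b hmod₁c hmod₁d hmod₂a hmod₂b hmod₂c hmod₂d n₁ hn₁pos hn₁hom n₂ hn₂pos
    hn₂def hn₂tri hn₂hom T hT_add hT_smul
end

section
/- Let E be a left module over L⁰(𝓕,ℝ) such that for any x, y ∈ E and any countable partition {Aₙ} of Ω into 𝓕-measurable sets, Ĩ_{Aₙ}x = Ĩ_{Aₙ}y for all n implies x = y. Let U ⊆ E be L⁰-convex, L⁰-absorbent, and L⁰-balanced with the countable concatenation property. If x ∈ E admits a sequence {ξₙ} in L⁰₊₊(𝓕) such that x ∈ ξₙU for each n ∈ ℕ and infₙ ξₙ < 1 a.e. on Ω (equivalently, the random gauge functional p_U(x) = ⋀{ξ ∈ L⁰₊₊(𝓕) : x ∈ ξU} satisfies p_U(x) < 1 a.e.), then x ∈ U. -/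
open MeasureTheory Filter Classical

/-- `Ĩ_A`, the equivalence class in `L⁰(𝓕,ℝ)` of the indicator function of a measurable set
`A` (junk value `0` if `A` is not measurable). -/
noncomputable def ind {Ω : Type*} [MeasurableSpace Ω] (P : Measure Ω) (A : Set Ω) :
    Ω →ₘ[P] ℝ :=
  if h : MeasurableSet A then
    AEEqFun.mk (A.indicator fun _ => (1 : ℝ))
      ((measurable_const.indicator h).aestronglyMeasurable)
  else 0

/-!
Cut `Ω` into the measurable pieces `Aₙ` on which `ξₙ < 1` (first such `n`); they cover `Ω` a.e.
because `infₙ ξₙ < 1`. Writing `x = ξₙ • uₙ` with `uₙ ∈ U`, the element `(Ĩ_{Aₙ} ξₙ) • uₙ` lies in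
`U` by balancedness and agrees with `x` on `Aₙ`. The countable concatenation of these elements
lies in `U` and agrees with `x` on every piece, so it is `x`.
-/

section

variable {Ω : Type*} [MeasurableSpace Ω] {P : Measure Ω}

theorem coeFn_ind {A : Set Ω} (hA : MeasurableSet A) :
    (ind P A : Ω → ℝ) =ᵐ[P] A.indicator fun _ => (1 : ℝ) := by
  rw [ind, dif_pos hA]
  exact AEEqFun.coeFn_mk _ _

theorem ind_mul_self {A : Set Ω} (hA : MeasurableSet A) : ind P A * ind P A = ind P A := by
  rw [ind, dif_pos hA, AEEqFun.mk_mul_mk]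
  congr 1
  funext ω
  by_cases h : ω ∈ A <;> simp [h]

theorem abs_ind_mul_le_one {A : Set Ω} (hA : MeasurableSet A) {f : Ω →ₘ[P] ℝ}
    (hf : ∀ᵐ ω ∂P, ω ∈ A → |f ω| ≤ 1) : ∀ᵐ ω ∂P, |(ind P A * f) ω| ≤ 1 := by
  filter_upwards [AEEqFun.coeFn_mul (ind P A) f, coeFn_ind hA, hf] with ω hmul hind hfω
  rw [hmul, Pi.mul_apply, hind]
  by_cases hω : ω ∈ A
  · simpa [Set.indicator_of_mem hω] using hfω hω
  · simp [Set.indicator_of_notMem hω]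

/-- Adding the null set `(⋃ₙ Bₙ)ᶜ` to every `Bₙ` and disjointing gives the partition. -/
theorem exists_measurable_partition_ae_subset {B : ℕ → Set Ω} (hB : ∀ n, MeasurableSet (B n))
    (hcover : ∀ᵐ ω ∂P, ω ∈ ⋃ n, B n) :
    ∃ A : ℕ → Set Ω, (∀ n, MeasurableSet (A n)) ∧ Pairwise (Function.onFun Disjoint A) ∧
      (⋃ n, A n) = Set.univ ∧ ∀ n, ∀ᵐ ω ∂P, ω ∈ A n → ω ∈ B n := by
  set C : ℕ → Set Ω := fun n => B n ∪ (⋃ m, B m)ᶜ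
  have hC : ∀ n, MeasurableSet (C n) := fun n => (hB n).union (MeasurableSet.iUnion hB).compl
  refine ⟨disjointed C, MeasurableSet.disjointed hC, disjoint_disjointed C, ?_, fun n => ?_⟩
  · rw [iUnion_disjointed, Set.eq_univ_iff_forall]
    intro ω
    by_cases hω : ω ∈ ⋃ m, B m
    · obtain ⟨m, hm⟩ := Set.mem_iUnion.mp hω
      exact Set.mem_iUnion.mpr ⟨m, Or.inl hm⟩
    · exact Set.mem_iUnion.mpr ⟨0, Or.inr hω⟩
  · filter_upwards [hcover] with ω hω hωA
    exact (disjointed_subset C n hωA).resolve_right (not_not_intro hω)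

end

theorem stmt6_general
    {Ω E : Type*} [MeasurableSpace Ω] {P : Measure Ω}
    [SMul (Ω →ₘ[P] ℝ) E]
    -- `E` is a left module over `L⁰(𝓕,ℝ)`
    (hmodc : ∀ (ξ η : Ω →ₘ[P] ℝ) (x : E), (ξ * η) • x = ξ • (η • x))
    -- countable concatenations in `E` are uniquely determined
    (hdet : ∀ (x y : E) (A : ℕ → Set Ω), (∀ n, MeasurableSet (A n)) →
      Pairwise (Function.onFun Disjoint A) → (⋃ n, A n) = Set.univ →
      (∀ n, ind P (A n) • x = ind P (A n) • y) → x = y)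
    (U : Set E)
    -- `U` is `L⁰`-balanced
    (hbal : ∀ η : Ω →ₘ[P] ℝ, (∀ᵐ ω ∂P, |η ω| ≤ 1) → ∀ u ∈ U, η • u ∈ U)
    -- `U` has the countable concatenation property
    (hccp : ∀ (u : ℕ → E), (∀ n, u n ∈ U) → ∀ (A : ℕ → Set Ω),
      (∀ n, MeasurableSet (A n)) → Pairwise (Function.onFun Disjoint A) → (⋃ n, A n) = Set.univ →
      ∃ u₀ ∈ U, ∀ n, ind P (A n) • u₀ = ind P (A n) • u n)
    -- the point `x` and the sequence `{ξₙ}` in `L⁰₊₊(𝓕)` with `x ∈ ξₙ·U`, `infₙ ξₙ < 1` a.e.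
    (x : E) (ξ : ℕ → Ω →ₘ[P] ℝ)
    (hξpos : ∀ n, ∀ᵐ ω ∂P, 0 < ξ n ω)
    (hxin : ∀ n, ∃ u ∈ U, x = ξ n • u)
    (hinf : ∀ᵐ ω ∂P, (⨅ n, ξ n ω) < 1) :
    x ∈ U := by
  obtain ⟨A, hAm, hAd, hAu, hAlt⟩ := exists_measurable_partition_ae_subset (P := P)
    (B := fun n => {ω | ξ n ω < 1})
    (fun n => measurableSet_lt (ξ n).stronglyMeasurable.measurable measurable_const)
    (by
      filter_upwards [hinf] with ω hω
      simpa using exists_lt_of_ciInf_lt hω)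
  choose u huU hxu using hxin
  have hcut : ∀ n, (ind P (A n) * ξ n) • u n ∈ U := fun n => by
    refine hbal _ (abs_ind_mul_le_one (hAm n) ?_) _ (huU n)
    filter_upwards [hAlt n, hξpos n] with ω hlt hpos hω
    exact (abs_of_pos hpos).trans_le (hlt hω).le
  obtain ⟨u₀, hu₀U, hu₀⟩ := hccp _ hcut A hAm hAd hAu
  convert hu₀U
  refine hdet x u₀ A hAm hAd hAu fun n => ?_
  rw [hu₀ n, ← hmodc, ← mul_assoc, ind_mul_self (hAm n), hmodc, ← hxu n]

/-- Let `E` be an `L⁰(𝓕,ℝ)`-module in which countable concatenations are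
uniquely determined, and `U ⊆ E` an `L⁰`-convex, `L⁰`-absorbent, `L⁰`-balanced subset with the
countable concatenation property.  If `x ∈ E` admits a sequence `{ξₙ}` in `L⁰₊₊(𝓕)` with
`x ∈ ξₙ·U` for every `n` and `infₙ ξₙ < 1` a.e., then `x ∈ U`. -/
theorem stmt6
    {Ω E : Type*} [MeasurableSpace Ω] {P : Measure Ω} [IsProbabilityMeasure P]
    [AddCommGroup E] [SMul (Ω →ₘ[P] ℝ) E]
    -- `E` is a left module over `L⁰(𝓕,ℝ)`
    (hmoda : ∀ (ξ : Ω →ₘ[P] ℝ) (x y : E), ξ • (x + y) = ξ • x + ξ • y)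
    (hmodb : ∀ (ξ η : Ω →ₘ[P] ℝ) (x : E), (ξ + η) • x = ξ • x + η • x)
    (hmodc : ∀ (ξ η : Ω →ₘ[P] ℝ) (x : E), (ξ * η) • x = ξ • (η • x))
    (hmodd : ∀ x : E, (1 : Ω →ₘ[P] ℝ) • x = x)
    -- countable concatenations in `E` are uniquely determined
    (hdet : ∀ (x y : E) (A : ℕ → Set Ω), (∀ n, MeasurableSet (A n)) →
      Pairwise (Function.onFun Disjoint A) → (⋃ n, A n) = Set.univ →
      (∀ n, ind P (A n) • x = ind P (A n) • y) → x = y)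
    (U : Set E)
    -- `U` is `L⁰`-convex
    (hconv : ∀ x ∈ U, ∀ y ∈ U, ∀ ξ : Ω →ₘ[P] ℝ,
      (∀ᵐ ω ∂P, 0 ≤ ξ ω ∧ ξ ω ≤ 1) → ξ • x + (1 - ξ) • y ∈ U)
    -- `U` is `L⁰`-absorbent
    (habs : ∀ x : E, ∃ ξ : Ω →ₘ[P] ℝ, (∀ᵐ ω ∂P, 0 < ξ ω) ∧
      ∀ η : Ω →ₘ[P] ℝ, (∀ᵐ ω ∂P, |η ω| ≤ ξ ω) → η • x ∈ U)
    -- `U` is `L⁰`-balanced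
    (hbal : ∀ η : Ω →ₘ[P] ℝ, (∀ᵐ ω ∂P, |η ω| ≤ 1) → ∀ u ∈ U, η • u ∈ U)
    -- `U` has the countable concatenation property
    (hccp : ∀ (u : ℕ → E), (∀ n, u n ∈ U) → ∀ (A : ℕ → Set Ω),
      (∀ n, MeasurableSet (A n)) → Pairwise (Function.onFun Disjoint A) → (⋃ n, A n) = Set.univ →
      ∃ u₀ ∈ U, ∀ n, ind P (A n) • u₀ = ind P (A n) • u n)
    -- the point `x` and the sequence `{ξₙ}` in `L⁰₊₊(𝓕)` with `x ∈ ξₙ·U`, `infₙ ξₙ < 1` a.e.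
    (x : E) (ξ : ℕ → Ω →ₘ[P] ℝ)
    (hξpos : ∀ n, ∀ᵐ ω ∂P, 0 < ξ n ω)
    (hxin : ∀ n, ∃ u ∈ U, x = ξ n • u)
    (hinf : ∀ᵐ ω ∂P, (⨅ n, ξ n ω) < 1) :
    x ∈ U :=
  stmt6_general hmodc hdet U hbal hccp x ξ hξpos hxin hinf
end

section
/- Let (E,𝒫) be a random locally convex module over K with base (Ω,𝓕,P) such that E has the countable concatenation property. Then: (1) if G ⊆ E has the countable concatenation property, then the closure of G in the (ε,λ)-topology also has the countable concatenation property; (2) if G ⊆ E is L⁰-convex (ξx+(1−ξ)y ∈ G for all x,y ∈ G and ξ ∈ L⁰₊(𝓕) with 0 ≤ ξ ≤ 1), then the (ε,λ)-closure of G equals the (ε,λ)-closure of its countable concatenation hull H_cc(G), and this common closure has the countable concatenation property. -/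
open MeasureTheory Filter Classical

/-- `⋁{‖x‖ : ‖·‖ ∈ Q}` for a finite subfamily `Q` of a family of `L⁰`-seminorms, evaluated
pointwise (the seminorms being a.e. nonnegative, truncating negative values is harmless, and
the supremum over the empty family is `0`). -/
noncomputable def finSup {ι : Type*} (Q : Finset ι) (g : ι → ℝ) : ℝ :=
  ((Q.sup fun i => Real.toNNReal (g i) : NNReal) : ℝ)

/-- `Ĩ_A`, the equivalence class in `L⁰(𝓕,K)` of the indicator function of a measurable set
`A` (junk value `0` if `A` is not measurable). -/
noncomputable def indK (K : Type*) [RCLike K] {Ω : Type*} [MeasurableSpace Ω] (P : Measure Ω)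
    (A : Set Ω) : Ω →ₘ[P] K :=
  if h : MeasurableSet A then
    AEEqFun.mk (A.indicator fun _ => (1 : K))
      ((stronglyMeasurable_const.indicator h).aestronglyMeasurable)
  else 0

/-- The canonical embedding `L⁰(𝓕,ℝ) → L⁰(𝓕,K)`. -/
noncomputable def toK (K : Type*) [RCLike K] {Ω : Type*} [MeasurableSpace Ω] {P : Measure Ω}
    (ξ : Ω →ₘ[P] ℝ) : Ω →ₘ[P] K :=
  ξ.comp RCLike.ofReal RCLike.continuous_ofReal

/-- A subset `G` of an `L⁰(𝓕,K)`-module has the countable concatenation property if every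
sequence in `G` can be concatenated along every countable measurable partition of `Ω` within
`G`. -/
def ccp (K : Type*) [RCLike K] {Ω : Type*} [MeasurableSpace Ω] (P : Measure Ω)
    {E : Type*} [SMul (Ω →ₘ[P] K) E] (G : Set E) : Prop :=
  ∀ u : ℕ → E, (∀ n, u n ∈ G) → ∀ A : ℕ → Set Ω, (∀ n, MeasurableSet (A n)) →
    Pairwise (Function.onFun Disjoint A) → (⋃ n, A n) = Set.univ →
    ∃ x ∈ G, ∀ n, indK K P (A n) • x = indK K P (A n) • u n

/-- `H_cc(G)`, the countable concatenation hull of `G`. -/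
def Hcc (K : Type*) [RCLike K] {Ω : Type*} [MeasurableSpace Ω] (P : Measure Ω)
    {E : Type*} [SMul (Ω →ₘ[P] K) E] (G : Set E) : Set E :=
  {x | ∃ (u : ℕ → E) (A : ℕ → Set Ω), (∀ n, u n ∈ G) ∧ (∀ n, MeasurableSet (A n)) ∧
    Pairwise (Function.onFun Disjoint A) ∧ (⋃ n, A n) = Set.univ ∧
    ∀ n, indK K P (A n) • x = indK K P (A n) • u n}

/-- The closure of a subset `G` of a random locally convex module in the `(ε,λ)`-topology
induced by the family of `L⁰`-seminorms `p`. -/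
def elCl {Ω : Type*} [MeasurableSpace Ω] (P : Measure Ω) {ι E : Type*} [AddCommGroup E]
    (p : ι → E → Ω →ₘ[P] ℝ) (G : Set E) : Set E :=
  {x | ∀ (Q : Finset ι) (ε lam : ℝ), 0 < ε → 0 < lam → lam < 1 →
    ∃ g ∈ G, ENNReal.ofReal (1 - lam) < P {ω | finSup Q (fun i => p i (x - g) ω) < ε}}


/-!
Both parts rest on one observation: if `x` and `y` agree on `A`, i.e. `Ĩ_A x = Ĩ_A y`, then
`‖x‖ = ‖y‖` a.e. on `A`, so whether `‖x - g‖_Q < ε` holds is decided piece by piece on a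
partition. For (1), approximate the pieces `uₙ` of a concatenation by `gₙ ∈ G` with error
probabilities `δₙ`, `∑ δₙ < δ`; the concatenation of the `gₙ` then approximates that of the `uₙ`.
For (2), an element of `H_cc(G)` agrees with a finite concatenation on a set of probability
close to `1`, and finite concatenations stay in `G` by `L⁰`-convexity with indicator
coefficients. Finally, `H_cc(G)` has the countable concatenation property because a
concatenation of concatenations is one along the common refinement of the partitions.
-/

section Indicator

variable {Ω : Type*} [MeasurableSpace Ω] {P : Measure Ω} {K : Type*} [RCLike K] {A B : Set Ω}

lemma indK_coeFn (hA : MeasurableSet A) :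
    ⇑(indK K P A) =ᵐ[P] A.indicator fun _ => (1 : K) := by
  rw [indK, dif_pos hA]
  exact AEEqFun.coeFn_mk _ _

lemma indK_empty : indK K P ∅ = 0 := by
  refine AEEqFun.ext ?_
  filter_upwards [indK_coeFn (K := K) (P := P) MeasurableSet.empty,
    AEEqFun.coeFn_zero (α := Ω) (μ := P) (β := K)] with ω h h0
  simp [h, h0]

lemma indK_mul (hA : MeasurableSet A) (hB : MeasurableSet B) :
    indK K P A * indK K P B = indK K P (A ∩ B) := by
  refine AEEqFun.ext ?_
  filter_upwards [AEEqFun.coeFn_mul (indK K P A) (indK K P B), indK_coeFn (K := K) hA,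
    indK_coeFn (K := K) hB, indK_coeFn (K := K) (hA.inter hB)] with ω hm hA' hB' hAB
  rw [hm, Pi.mul_apply, hA', hB', hAB]
  by_cases hωA : ω ∈ A <;> by_cases hωB : ω ∈ B <;> simp [hωA, hωB]

lemma one_sub_indK (hA : MeasurableSet A) : 1 - indK K P A = indK K P Aᶜ := by
  refine AEEqFun.ext ?_
  filter_upwards [AEEqFun.coeFn_sub (1 : Ω →ₘ[P] K) (indK K P A), AEEqFun.coeFn_one (α := Ω) (μ := P) (β := K),
    indK_coeFn (K := K) hA, indK_coeFn (K := K) hA.compl] with ω hs h1 hA' hAc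
  rw [hs, Pi.sub_apply, h1, hA', hAc]
  by_cases hω : ω ∈ A <;> simp [hω]

lemma toK_indK (hA : MeasurableSet A) : toK K (indK ℝ P A) = indK K P A := by
  refine AEEqFun.ext ?_
  filter_upwards [AEEqFun.coeFn_comp _ (RCLike.continuous_ofReal (K := K)) (indK ℝ P A),
    indK_coeFn (K := ℝ) (P := P) hA, indK_coeFn (K := K) (P := P) hA] with ω hc hR hK
  rw [toK, hc, Function.comp_apply, hR, hK]
  by_cases hω : ω ∈ A <;> simp [hω]

lemma indK_real_mem_Icc (hA : MeasurableSet A) :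
    ∀ᵐ ω ∂P, 0 ≤ indK ℝ P A ω ∧ indK ℝ P A ω ≤ 1 := by
  filter_upwards [indK_coeFn (K := ℝ) (P := P) hA] with ω h
  by_cases hω : ω ∈ A <;> simp [h, hω]

end Indicator

section ModuleAxioms

variable {M E : Type*} [SMul M E] [AddCommGroup E]

lemma smul_sub_of_smul_add (hmoda : ∀ (ξ : M) (x y : E), ξ • (x + y) = ξ • x + ξ • y)
    (ξ : M) (x y : E) : ξ • (x - y) = ξ • x - ξ • y :=
  (AddMonoidHom.mk' (ξ • · : E → E) (hmoda ξ)).map_sub x y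

lemma zero_smul_of_add_smul [AddMonoid M] (hmodb : ∀ (ξ η : M) (x : E), (ξ + η) • x = ξ • x + η • x)
    (x : E) : (0 : M) • x = 0 :=
  (AddMonoidHom.mk' (· • x : M → E) fun ξ η => hmodb ξ η x).map_zero

end ModuleAxioms

section Concatenation

variable {Ω : Type*} [MeasurableSpace Ω] {P : Measure Ω} {K : Type*} [RCLike K]
  {E : Type*} [SMul (Ω →ₘ[P] K) E] {A B : Set Ω}

lemma indK_smul_indK_smul (hmodc : ∀ (ξ η : Ω →ₘ[P] K) (x : E), (ξ * η) • x = ξ • (η • x))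
    (hA : MeasurableSet A) (hB : MeasurableSet B) (x : E) :
    indK K P A • (indK K P B • x) = indK K P (A ∩ B) • x := by
  rw [← hmodc, indK_mul hA hB]

lemma indK_inter_smul_eq (hmodc : ∀ (ξ η : Ω →ₘ[P] K) (x : E), (ξ * η) • x = ξ • (η • x))
    (hA : MeasurableSet A) (hB : MeasurableSet B) {x y : E}
    (h : indK K P A • x = indK K P A • y) : indK K P (B ∩ A) • x = indK K P (B ∩ A) • y := by
  rw [← indK_smul_indK_smul hmodc hB hA, h, indK_smul_indK_smul hmodc hB hA]

end Concatenation

lemma finSup_lt_iff {ι : Type*} {Q : Finset ι} {g : ι → ℝ} {ε : ℝ} (hε : 0 < ε) :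
    finSup Q g < ε ↔ ∀ i ∈ Q, g i < ε := by
  have hε' : ε = (ε.toNNReal : ℝ) := (Real.coe_toNNReal ε hε.le).symm
  conv_lhs => rw [finSup, hε', NNReal.coe_lt_coe, Finset.sup_lt_iff (Real.toNNReal_pos.mpr hε)]
  exact forall₂_congr fun i _ => Real.toNNReal_lt_toNNReal_iff hε

section Seminorms

variable {Ω : Type*} [MeasurableSpace Ω] {P : Measure Ω} {K : Type*} [RCLike K]
  {ι E : Type*} [SMul (Ω →ₘ[P] K) E]

/-- `{ω | ‖x‖_Q(ω) < ε}`. -/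
def seminormSublevel (p : ι → E → Ω →ₘ[P] ℝ) (Q : Finset ι) (ε : ℝ) (x : E) : Set Ω :=
  {ω | finSup Q (fun i => p i x ω) < ε}

lemma measurableSet_seminormSublevel (p : ι → E → Ω →ₘ[P] ℝ) (Q : Finset ι) {ε : ℝ}
    (hε : 0 < ε) (x : E) : MeasurableSet (seminormSublevel p Q ε x) := by
  have hQ : seminormSublevel p Q ε x = ⋂ i ∈ Q, {ω | p i x ω < ε} := by
    ext ω
    simp only [seminormSublevel, Set.mem_ofPred_eq, Set.mem_iInter, finSup_lt_iff hε]
  rw [hQ]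
  exact MeasurableSet.biInter Q.countable_toSet fun i _ =>
    measurableSet_lt (p i x).measurable measurable_const

lemma ofReal_one_sub_lt_iff_measure_compl_lt [IsProbabilityMeasure P] {S : Set Ω}
    (hS : MeasurableSet S) {lam : ℝ} (hlam₀ : 0 ≤ lam) (hlam₁ : lam ≤ 1) :
    ENNReal.ofReal (1 - lam) < P S ↔ P Sᶜ < ENNReal.ofReal lam := by
  rw [prob_compl_eq_one_sub hS, ENNReal.ofReal_sub _ hlam₀, ENNReal.ofReal_one,
    ENNReal.sub_lt_iff_lt_right ENNReal.ofReal_ne_top (ENNReal.ofReal_le_one.mpr hlam₁),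
    ENNReal.sub_lt_iff_lt_right (measure_ne_top P S) prob_le_one, add_comm]

lemma mem_elCl_iff [AddCommGroup E] [IsProbabilityMeasure P] {p : ι → E → Ω →ₘ[P] ℝ} {G : Set E} {x : E} :
    x ∈ elCl P p G ↔ ∀ (Q : Finset ι) (ε : ℝ), 0 < ε → ∀ δ : ENNReal, 0 < δ →
      ∃ g ∈ G, P (seminormSublevel p Q ε (x - g))ᶜ < δ := by
  constructor
  · intro hx Q ε hε δ hδ
    set η := min δ (1 / 2)
    have hη : η ≠ ⊤ := ne_top_of_le_ne_top (by norm_num) (min_le_right δ _)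
    have hη₀ : 0 < η.toReal := ENNReal.toReal_pos (lt_min hδ (by norm_num)).ne' hη
    have hη₁ : η.toReal < 1 :=
      (ENNReal.toReal_mono (by norm_num) (min_le_right δ _)).trans_lt (by norm_num)
    obtain ⟨g, hg, hlt⟩ := hx Q ε η.toReal hε hη₀ hη₁
    change _ < P (seminormSublevel p Q ε (x - g)) at hlt
    rw [ofReal_one_sub_lt_iff_measure_compl_lt (measurableSet_seminormSublevel p Q hε _)
      hη₀.le hη₁.le, ENNReal.ofReal_toReal hη] at hlt
    exact ⟨g, hg, hlt.trans_le (min_le_left _ _)⟩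
  · intro hx Q ε lam hε hlam₀ hlam₁
    obtain ⟨g, hg, hlt⟩ := hx Q ε hε (ENNReal.ofReal lam) (ENNReal.ofReal_pos.mpr hlam₀)
    exact ⟨g, hg, (ofReal_one_sub_lt_iff_measure_compl_lt
      (measurableSet_seminormSublevel p Q hε _) hlam₀.le hlam₁.le).mpr hlt⟩

lemma ae_eq_of_indK_smul_eq (q : E → Ω →ₘ[P] ℝ)
    (hq : ∀ (ξ : Ω →ₘ[P] K) (x : E), ∀ᵐ ω ∂P, q (ξ • x) ω = ‖ξ ω‖ * q x ω) {A : Set Ω}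
    (hA : MeasurableSet A) {z w : E} (h : indK K P A • z = indK K P A • w) :
    ∀ᵐ ω ∂P, ω ∈ A → q z ω = q w ω := by
  filter_upwards [hq (indK K P A) z, hq (indK K P A) w, indK_coeFn (K := K) hA]
    with ω hz hw hind hω
  rw [hind, Set.indicator_of_mem hω, norm_one, one_mul] at hz hw
  rw [← hz, ← hw, h]

lemma ae_mem_seminormSublevel_iff (p : ι → E → Ω →ₘ[P] ℝ)
    (hp_hom : ∀ i (ξ : Ω →ₘ[P] K) (x : E), ∀ᵐ ω ∂P, p i (ξ • x) ω = ‖ξ ω‖ * p i x ω)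
    (Q : Finset ι) (ε : ℝ) {A : Set Ω} (hA : MeasurableSet A) {z w : E}
    (h : indK K P A • z = indK K P A • w) :
    ∀ᵐ ω ∂P, ω ∈ A → (ω ∈ seminormSublevel p Q ε z ↔ ω ∈ seminormSublevel p Q ε w) := by
  have hQ := (ae_ball_iff Q.countable_toSet).mpr fun i _ =>
    ae_eq_of_indK_smul_eq (p i) (hp_hom i) hA h
  filter_upwards [hQ] with ω hω hωA
  simp only [seminormSublevel, finSup, Set.mem_ofPred_eq]
  rw [Finset.sup_congr rfl fun i hi => congrArg Real.toNNReal (hω i hi hωA)]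

end Seminorms

lemma exists_measure_compl_accumulate_lt {Ω : Type*} [MeasurableSpace Ω] {μ : Measure Ω}
    [IsFiniteMeasure μ] {A : ℕ → Set Ω} (hAm : ∀ n, MeasurableSet (A n))
    (hAU : ⋃ n, A n = Set.univ) {δ : ENNReal} (hδ : 0 < δ) :
    ∃ N, μ (Set.accumulate A N)ᶜ < δ := by
  have hlim := tendsto_measure_iInter_atTop (μ := μ) (s := fun N => (Set.accumulate A N)ᶜ)
    (fun N => (MeasurableSet.biUnion (Set.to_countable _) fun k _ => hAm k).compl.nullMeasurableSet)
    (fun _ _ h => Set.compl_subset_compl.mpr (Set.monotone_accumulate h))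
    ⟨0, measure_ne_top _ _⟩
  rw [← Set.compl_iUnion, Set.iUnion_accumulate, hAU, Set.compl_univ, measure_empty] at hlim
  exact (hlim.eventually_lt_const hδ).exists

def IsL0Convex (K : Type*) [RCLike K] {Ω : Type*} [MeasurableSpace Ω] (P : Measure Ω)
    {E : Type*} [Add E] [SMul (Ω →ₘ[P] K) E] (G : Set E) : Prop :=
  ∀ x ∈ G, ∀ y ∈ G, ∀ ξ : Ω →ₘ[P] ℝ, (∀ᵐ ω ∂P, 0 ≤ ξ ω ∧ ξ ω ≤ 1) →
    toK K ξ • x + toK K (1 - ξ) • y ∈ G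

section CountableConcatenation

variable {Ω : Type*} [MeasurableSpace Ω] {P : Measure Ω} {K : Type*} [RCLike K]
  {E : Type*} [SMul (Ω →ₘ[P] K) E]

lemma subset_Hcc (G : Set E) : G ⊆ Hcc K P G := by
  intro x hx
  refine ⟨fun _ => x, fun n => if n = 0 then Set.univ else ∅, fun _ => hx,
    fun n => by by_cases hn : n = 0 <;> simp [hn], ?_, ?_, fun _ => rfl⟩
  · intro a b hab
    by_cases ha : a = 0 <;> by_cases hb : b = 0 <;> simp_all [Function.onFun]
  · exact Set.eq_univ_of_forall fun ω => Set.mem_iUnion.mpr ⟨0, by simp⟩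

lemma ccp_Hcc (hmodc : ∀ (ξ η : Ω →ₘ[P] K) (x : E), (ξ * η) • x = ξ • (η • x))
    (hE : ccp K P (Set.univ : Set E)) (G : Set E) : ccp K P (Hcc K P G) := by
  intro u hu B hBm hBd hBU
  choose g A hgG hAm hAd hAU hug using hu
  obtain ⟨x, -, hxu⟩ := hE u (fun _ => Set.mem_univ _) B hBm hBd hBU
  let C : ℕ × ℕ → Set Ω := fun nm => B nm.1 ∩ A nm.1 nm.2
  have hCd : Pairwise (Function.onFun Disjoint C) := by
    rintro ⟨n, m⟩ ⟨n', m'⟩ hne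
    by_cases hn : n = n'
    · subst hn
      exact (hAd n fun hm => hne (Prod.ext rfl hm)).mono Set.inter_subset_right Set.inter_subset_right
    · exact (hBd hn).mono Set.inter_subset_left Set.inter_subset_left
  have hCU : ⋃ nm, C nm = Set.univ := by
    refine Set.eq_univ_of_forall fun ω => ?_
    obtain ⟨n, hn⟩ := Set.mem_iUnion.mp (hBU.symm ▸ Set.mem_univ ω)
    obtain ⟨m, hm⟩ := Set.mem_iUnion.mp ((hAU n).symm ▸ Set.mem_univ ω)
    exact Set.mem_iUnion.mpr ⟨(n, m), hn, hm⟩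
  let e : ℕ ≃ ℕ × ℕ := Nat.pairEquiv.symm
  refine ⟨x, ⟨fun k => g (e k).1 (e k).2, fun k => C (e k), fun k => hgG _ _,
    fun k => (hBm _).inter (hAm _ _), hCd.comp_of_injective e.injective,
    by rw [e.surjective.iUnion_comp C, hCU], fun k => ?_⟩, hxu⟩
  show indK K P (C (e k)) • x = indK K P (C (e k)) • g (e k).1 (e k).2
  generalize e k = nm
  obtain ⟨n, m⟩ := nm
  calc indK K P (B n ∩ A n m) • x = indK K P (A n m ∩ B n) • x := by rw [Set.inter_comm]
    _ = indK K P (A n m ∩ B n) • u n := indK_inter_smul_eq hmodc (hBm n) (hAm n m) (hxu n)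
    _ = indK K P (B n ∩ A n m) • u n := by rw [Set.inter_comm]
    _ = indK K P (B n ∩ A n m) • g n m := indK_inter_smul_eq hmodc (hAm n m) (hBm n) (hug n m)

lemma elCl_mono [AddCommGroup E] {ι : Type*} (p : ι → E → Ω →ₘ[P] ℝ) {G H : Set E}
    (hGH : G ⊆ H) : elCl P p G ⊆ elCl P p H := fun _ hx Q ε lam hε hlam₀ hlam₁ =>
  let ⟨g, hg, hlt⟩ := hx Q ε lam hε hlam₀ hlam₁
  ⟨g, hGH hg, hlt⟩

lemma ccp_elCl [AddCommGroup E] [IsProbabilityMeasure P] {ι : Type*} {p : ι → E → Ω →ₘ[P] ℝ}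
    (hmoda : ∀ (ξ : Ω →ₘ[P] K) (x y : E), ξ • (x + y) = ξ • x + ξ • y)
    (hp_hom : ∀ i (ξ : Ω →ₘ[P] K) (x : E), ∀ᵐ ω ∂P, p i (ξ • x) ω = ‖ξ ω‖ * p i x ω)
    (hE : ccp K P (Set.univ : Set E)) {G : Set E} (hG : ccp K P G) :
    ccp K P (elCl P p G) := by
  intro u hu A hAm hAd hAU
  obtain ⟨x, -, hxu⟩ := hE u (fun _ => Set.mem_univ _) A hAm hAd hAU
  refine ⟨x, mem_elCl_iff.mpr fun Q ε hε δ hδ => ?_, hxu⟩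
  obtain ⟨δs, hδs_pos, hδs_sum⟩ := ENNReal.exists_pos_sum_of_countable hδ.ne' ℕ
  choose gs hgsG hgs using fun n =>
    mem_elCl_iff.mp (hu n) Q ε hε (δs n) (ENNReal.coe_pos.mpr (hδs_pos n))
  obtain ⟨g, hgG, hggs⟩ := hG gs hgsG A hAm hAd hAU
  refine ⟨g, hgG, ?_⟩
  set S := seminormSublevel p Q ε (x - g)
  have hpiece : ∀ n, P (A n ∩ Sᶜ) ≤ δs n := by
    intro n
    have hagree : indK K P (A n) • (x - g) = indK K P (A n) • (u n - gs n) := by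
      rw [smul_sub_of_smul_add hmoda, smul_sub_of_smul_add hmoda, hxu n, hggs n]
    refine (measure_mono_ae ?_).trans (hgs n).le
    filter_upwards [ae_mem_seminormSublevel_iff p hp_hom Q ε (hAm n) hagree] with ω hω
    exact fun ⟨hωA, hωS⟩ hωS' => hωS ((hω hωA).mpr hωS')
  calc P Sᶜ = P (⋃ n, A n ∩ Sᶜ) := by rw [← Set.iUnion_inter, hAU, Set.univ_inter]
    _ ≤ ∑' n, P (A n ∩ Sᶜ) := measure_iUnion_le _
    _ ≤ ∑' n, (δs n : ENNReal) := ENNReal.tsum_le_tsum hpiece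
    _ < δ := hδs_sum

lemma IsL0Convex.exists_mem_indK_smul_eq [AddCommGroup E]
    (hmoda : ∀ (ξ : Ω →ₘ[P] K) (x y : E), ξ • (x + y) = ξ • x + ξ • y)
    (hmodb : ∀ (ξ η : Ω →ₘ[P] K) (x : E), (ξ + η) • x = ξ • x + η • x)
    (hmodc : ∀ (ξ η : Ω →ₘ[P] K) (x : E), (ξ * η) • x = ξ • (η • x))
    {G : Set E} (hG : IsL0Convex K P G) {g : ℕ → E} (hg : ∀ n, g n ∈ G) {A : ℕ → Set Ω}
    (hAm : ∀ n, MeasurableSet (A n)) (hAd : Pairwise (Function.onFun Disjoint A)) (N : ℕ) :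
    ∃ z ∈ G, ∀ k ≤ N, indK K P (A k) • z = indK K P (A k) • g k := by
  induction N with
  | zero => exact ⟨g 0, hg 0, fun k hk => by rw [Nat.le_zero.mp hk]⟩
  | succ N ih =>
    obtain ⟨z, hzG, hz⟩ := ih
    have hmem := hG (g (N + 1)) (hg _) z hzG _ (indK_real_mem_Icc (hAm (N + 1)))
    rw [one_sub_indK (hAm _), toK_indK (hAm _), toK_indK (hAm _).compl] at hmem
    refine ⟨_, hmem, fun k hk => ?_⟩
    rw [hmoda, indK_smul_indK_smul hmodc (hAm k) (hAm _),
      indK_smul_indK_smul hmodc (hAm k) (hAm _).compl]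
    rcases hk.lt_or_eq with hk | rfl
    · rw [Set.disjoint_iff_inter_eq_empty.mp (hAd hk.ne),
        Set.inter_eq_left.mpr (Set.subset_compl_iff_disjoint_right.mpr (hAd hk.ne)), indK_empty,
        zero_smul_of_add_smul hmodb, zero_add, hz k (Nat.lt_succ_iff.mp hk)]
    · rw [Set.inter_self, Set.inter_compl_self, indK_empty, zero_smul_of_add_smul hmodb, add_zero]

lemma IsL0Convex.elCl_Hcc_subset [AddCommGroup E] [IsProbabilityMeasure P] {ι : Type*}
    {p : ι → E → Ω →ₘ[P] ℝ}
    (hmoda : ∀ (ξ : Ω →ₘ[P] K) (x y : E), ξ • (x + y) = ξ • x + ξ • y)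
    (hmodb : ∀ (ξ η : Ω →ₘ[P] K) (x : E), (ξ + η) • x = ξ • x + η • x)
    (hmodc : ∀ (ξ η : Ω →ₘ[P] K) (x : E), (ξ * η) • x = ξ • (η • x))
    (hp_hom : ∀ i (ξ : Ω →ₘ[P] K) (x : E), ∀ᵐ ω ∂P, p i (ξ • x) ω = ‖ξ ω‖ * p i x ω)
    {G : Set E} (hG : IsL0Convex K P G) : elCl P p (Hcc K P G) ⊆ elCl P p G := by
  intro x hx
  refine mem_elCl_iff.mpr fun Q ε hε δ hδ => ?_
  obtain ⟨y, ⟨g, A, hgG, hAm, hAd, hAU, hyg⟩, hxy⟩ :=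
    mem_elCl_iff.mp hx Q ε hε (δ / 2) (ENNReal.half_pos hδ.ne')
  obtain ⟨N, hN⟩ := exists_measure_compl_accumulate_lt (μ := P) hAm hAU (ENNReal.half_pos hδ.ne')
  obtain ⟨z, hzG, hzg⟩ := hG.exists_mem_indK_smul_eq hmoda hmodb hmodc hgG hAm hAd N
  refine ⟨z, hzG, ?_⟩
  have hagree : ∀ k ∈ Set.Iic N, indK K P (A k) • (x - z) = indK K P (A k) • (x - y) :=
    fun k hk => by rw [smul_sub_of_smul_add hmoda, smul_sub_of_smul_add hmoda, hzg k hk, hyg k]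
  have hsub : (seminormSublevel p Q ε (x - z))ᶜ
      ≤ᵐ[P] ((seminormSublevel p Q ε (x - y))ᶜ ∪ (Set.accumulate A N)ᶜ : Set Ω) := by
    filter_upwards [(Set.finite_Iic N).eventually_all.mpr fun k hk =>
      ae_mem_seminormSublevel_iff p hp_hom Q ε (hAm k) (hagree k hk)] with ω hω hωz
    by_cases hωN : ω ∈ Set.accumulate A N
    · obtain ⟨k, hk, hωk⟩ := Set.mem_accumulate.mp hωN
      exact Or.inl fun hωy => hωz ((hω k hk hωk).mpr hωy)
    · exact Or.inr hωN
  calc P (seminormSublevel p Q ε (x - z))ᶜ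
      ≤ P ((seminormSublevel p Q ε (x - y))ᶜ ∪ (Set.accumulate A N)ᶜ) := measure_mono_ae hsub
    _ ≤ P (seminormSublevel p Q ε (x - y))ᶜ + P (Set.accumulate A N)ᶜ := measure_union_le _ _
    _ < δ / 2 + δ / 2 := ENNReal.add_lt_add hxy hN
    _ = δ := ENNReal.add_halves δ

end CountableConcatenation

theorem stmt7_general
    {Ω K ι E : Type*} [MeasurableSpace Ω] {P : Measure Ω} [IsProbabilityMeasure P]
    [RCLike K] [AddCommGroup E] [SMul (Ω →ₘ[P] K) E]
    -- `E` is a left module over `L⁰(𝓕,K)`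
    (hmoda : ∀ (ξ : Ω →ₘ[P] K) (x y : E), ξ • (x + y) = ξ • x + ξ • y)
    (hmodb : ∀ (ξ η : Ω →ₘ[P] K) (x : E), (ξ + η) • x = ξ • x + η • x)
    (hmodc : ∀ (ξ η : Ω →ₘ[P] K) (x : E), (ξ * η) • x = ξ • (η • x))
    -- `𝒫 = {p i : i ∈ ι}` is a separating family of `L⁰`-seminorms on `E`
    (p : ι → E → Ω →ₘ[P] ℝ)
    (hp_hom : ∀ i (ξ : Ω →ₘ[P] K) (x : E), ∀ᵐ ω ∂P, p i (ξ • x) ω = ‖ξ ω‖ * p i x ω)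
    -- `E` itself has the countable concatenation property
    (hE : ccp K P (Set.univ : Set E)) :
    -- (1)
    (∀ G : Set E, ccp K P G → ccp K P (elCl P p G)) ∧
    -- (2)
    (∀ G : Set E,
      (∀ x ∈ G, ∀ y ∈ G, ∀ ξ : Ω →ₘ[P] ℝ, (∀ᵐ ω ∂P, 0 ≤ ξ ω ∧ ξ ω ≤ 1) →
        toK K ξ • x + toK K (1 - ξ) • y ∈ G) →
      elCl P p G = elCl P p (Hcc K P G) ∧ ccp K P (elCl P p G)) := by
  have hcl : ∀ G : Set E, ccp K P G → ccp K P (elCl P p G) :=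
    fun G hG => ccp_elCl hmoda hp_hom hE hG
  refine ⟨hcl, fun G hG => ?_⟩
  have hHcc : elCl P p G = elCl P p (Hcc K P G) :=
    (elCl_mono p (subset_Hcc G)).antisymm
      (IsL0Convex.elCl_Hcc_subset hmoda hmodb hmodc hp_hom hG)
  exact ⟨hHcc, hHcc ▸ hcl _ (ccp_Hcc hmodc hE G)⟩

/-- Let `(E,𝒫)` be a random locally convex module over `K` with base
`(Ω,𝓕,P)` such that `E` has the countable concatenation property.  Then (1) the
`(ε,λ)`-closure of any subset with the countable concatenation property again has this
property, and (2) for any `L⁰`-convex `G ⊆ E`, the `(ε,λ)`-closure of `G` equals the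
`(ε,λ)`-closure of `H_cc(G)` and has the countable concatenation property. -/
theorem stmt7
    {Ω K ι E : Type*} [MeasurableSpace Ω] {P : Measure Ω} [IsProbabilityMeasure P]
    [RCLike K] [AddCommGroup E] [SMul (Ω →ₘ[P] K) E]
    -- `E` is a left module over `L⁰(𝓕,K)`
    (hmoda : ∀ (ξ : Ω →ₘ[P] K) (x y : E), ξ • (x + y) = ξ • x + ξ • y)
    (hmodb : ∀ (ξ η : Ω →ₘ[P] K) (x : E), (ξ + η) • x = ξ • x + η • x)
    (hmodc : ∀ (ξ η : Ω →ₘ[P] K) (x : E), (ξ * η) • x = ξ • (η • x))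
    (hmodd : ∀ x : E, (1 : Ω →ₘ[P] K) • x = x)
    -- countable concatenations in `E` are uniquely determined
    (hdet : ∀ (x y : E) (A : ℕ → Set Ω), (∀ n, MeasurableSet (A n)) →
      Pairwise (Function.onFun Disjoint A) → (⋃ n, A n) = Set.univ →
      (∀ n, indK K P (A n) • x = indK K P (A n) • y) → x = y)
    -- `𝒫 = {p i : i ∈ ι}` is a separating family of `L⁰`-seminorms on `E`
    (p : ι → E → Ω →ₘ[P] ℝ)
    (hp_pos : ∀ i x, ∀ᵐ ω ∂P, 0 ≤ p i x ω)
    (hp_tri : ∀ i x y, ∀ᵐ ω ∂P, p i (x + y) ω ≤ p i x ω + p i y ω)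
    (hp_hom : ∀ i (ξ : Ω →ₘ[P] K) (x : E), ∀ᵐ ω ∂P, p i (ξ • x) ω = ‖ξ ω‖ * p i x ω)
    (hp_sep : ∀ x : E, (∀ i, ∀ᵐ ω ∂P, p i x ω = 0) → x = 0)
    -- `E` itself has the countable concatenation property
    (hE : ccp K P (Set.univ : Set E)) :
    -- (1)
    (∀ G : Set E, ccp K P G → ccp K P (elCl P p G)) ∧
    -- (2)
    (∀ G : Set E,
      (∀ x ∈ G, ∀ y ∈ G, ∀ ξ : Ω →ₘ[P] ℝ, (∀ᵐ ω ∂P, 0 ≤ ξ ω ∧ ξ ω ≤ 1) →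
        toK K ξ • x + toK K (1 - ξ) • y ∈ G) →
      elCl P p G = elCl P p (Hcc K P G) ∧ ccp K P (elCl P p G)) :=
  stmt7_general hmoda hmodb hmodc p hp_hom hE
end

section
/- Let (Ω,𝓕,P) be a nonatomic probability space and M = {x ∈ L⁰(𝓕) : there exists a real number m_x > 0 such that x > m_x a.e.}. Then M is L⁰-convex (ξx+(1−ξ)y ∈ M for all x,y ∈ M and ξ ∈ L⁰₊(𝓕) with 0 ≤ ξ ≤ 1), M is open in the locally L⁰-convex topology of L⁰(𝓕) (for every y ∈ M there is ε ∈ L⁰₊₊(𝓕) with {z ∈ L⁰(𝓕) : |z−y| ≤ ε} ⊆ M), and M is closed in the locally L⁰-convex topology of L⁰(𝓕) (for every y ∉ M there is ε ∈ L⁰₊₊(𝓕) with {z ∈ L⁰(𝓕) : |z−y| ≤ ε} ∩ M = ∅). -/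
/-!
Convexity and openness are pointwise: a convex combination of two functions exceeding `m` exceeds
`m`, and `U(m/2)` around a function exceeding `m` stays above `m/2`. For closedness, `y ∉ M` means
that `{y ≤ m}` is non-null for every `m > 0`, and it suffices to find `ε > 0` for which every
`{y + ε ≤ m}` is non-null, since `z ≤ y + ε` on `y + U(ε)`. If `y > 0` a.e., take `ε = y / 2`.
Otherwise `A = {y ≤ 0}` is non-null, and nonatomicity splits off from `A`, one after the other,
pairwise disjoint non-null sets `Bₙ`; on `Bₙ` take `ε = 1/(n+1)`.
-/

open MeasureTheory Filter

/-- The set `M = {x ∈ L⁰(𝓕) : x > m_x a.e. for some real m_x > 0}`. -/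
def Mset {Ω : Type*} [MeasurableSpace Ω] (P : Measure Ω) : Set (Ω →ₘ[P] ℝ) :=
  {x | ∃ m : ℝ, 0 < m ∧ ∀ᵐ ω ∂P, m < x ω}

open Set Function

theorem Set.exists_pairwise_disjoint_of_forall_split {α : Type*} {p : Set α → Prop}
    (hsplit : ∀ S, p S → ∃ B ⊆ S, p B ∧ p (S \ B)) {A : Set α} (hA : p A) :
    ∃ B : ℕ → Set α, Pairwise (Disjoint on B) ∧ ∀ n, B n ⊆ A ∧ p (B n) := by
  choose F hFS hF hFc using fun S : {S // p S} => hsplit S.1 S.2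
  let C : ℕ → {S // p S} := fun n => (fun S => ⟨S.1 \ F S, hFc S⟩)^[n] ⟨A, hA⟩
  have hC : ∀ n, (C (n + 1)).1 = (C n).1 \ F (C n) := fun n => by
    simp only [C, Function.iterate_succ_apply']
  have hanti : Antitone fun n => (C n).1 :=
    antitone_nat_of_succ_le fun n => (hC n).trans_subset sdiff_subset
  refine ⟨fun n => F (C n), (pairwise_disjoint_on _).2 fun m n hmn => ?_,
    fun n => ⟨(hFS _).trans (hanti n.zero_le), hF _⟩⟩
  have hsub : F (C n) ⊆ (C m).1 \ F (C m) := (hFS _).trans ((hanti hmn).trans_eq (hC m))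
  exact disjoint_sdiff_right.mono_right hsub

theorem exists_measurable_eq_on_pairwise_disjoint {Ω β : Type*} [MeasurableSpace Ω]
    [MeasurableSpace β] {B : ℕ → Set Ω} (hB : ∀ n, MeasurableSet (B n))
    (hdisj : Pairwise (Disjoint on B)) (c : ℕ → β) :
    ∃ f : Ω → β, Measurable f ∧ (∀ ω, f ω ∈ range c) ∧ ∀ n, ∀ ω ∈ B n, f ω = c n := by
  classical
  have hcover : ∀ ω, ∃ n, ω ∈ B n ∪ (⋃ k, B k)ᶜ := fun ω => by
    by_cases h : ω ∈ ⋃ k, B k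
    · obtain ⟨n, hn⟩ := mem_iUnion.1 h
      exact ⟨n, .inl hn⟩
    · exact ⟨0, .inr h⟩
  refine ⟨fun ω => c (Nat.find (hcover ω)),
    measurable_from_nat.comp (measurable_find hcover fun n =>
      (hB n).union (MeasurableSet.iUnion hB).compl),
    fun ω => mem_range_self _, fun n ω hω => congrArg c ?_⟩
  refine (Nat.find_eq_iff _).2 ⟨.inl hω, fun k hk => ?_⟩
  simp only [mem_union, mem_compl_iff, not_or, not_not]
  exact ⟨disjoint_right.1 (hdisj hk.ne) hω, mem_iUnion.2 ⟨n, hω⟩⟩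

section Nonatomic

variable {Ω : Type*} [MeasurableSpace Ω] {P : Measure Ω}

theorem exists_measurable_pos_forall_measure_inter_le_pos [IsFiniteMeasure P]
    (hnonatomic : ∀ A : Set Ω, MeasurableSet A → 0 < P A →
      ∃ B ⊆ A, MeasurableSet B ∧ 0 < P B ∧ P B < P A)
    {A : Set Ω} (hA : MeasurableSet A) (hPA : 0 < P A) :
    ∃ ε : Ω → ℝ, Measurable ε ∧ (∀ ω, 0 < ε ω) ∧ ∀ m > 0, 0 < P (A ∩ {ω | ε ω ≤ m}) := by
  have hsplit : ∀ S, MeasurableSet S ∧ 0 < P S →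
      ∃ B ⊆ S, (MeasurableSet B ∧ 0 < P B) ∧ MeasurableSet (S \ B) ∧ 0 < P (S \ B) := by
    rintro S ⟨hS, hPS⟩
    obtain ⟨B, hBS, hB, hPB, hlt⟩ := hnonatomic S hS hPS
    refine ⟨B, hBS, ⟨hB, hPB⟩, hS.diff hB, ?_⟩
    rw [measure_sdiff hBS hB.nullMeasurableSet (measure_ne_top P B)]
    exact tsub_pos_of_lt hlt
  obtain ⟨B, hdisj, hB⟩ := Set.exists_pairwise_disjoint_of_forall_split hsplit ⟨hA, hPA⟩
  obtain ⟨ε, hεm, hεc, hεB⟩ := exists_measurable_eq_on_pairwise_disjoint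
    (fun n => (hB n).2.1) hdisj fun n : ℕ => 1 / ((n : ℝ) + 1)
  refine ⟨ε, hεm, fun ω => ?_, fun m hm => ?_⟩
  · obtain ⟨n, hn⟩ := hεc ω
    rw [← hn]
    positivity
  · obtain ⟨n, hn⟩ := exists_nat_one_div_lt hm
    exact (hB n).2.2.trans_le
      (measure_mono fun ω hω => ⟨(hB n).1 hω, (hεB n ω hω).trans_le hn.le⟩)

end Nonatomic

namespace Mset

variable {Ω : Type*} [MeasurableSpace Ω] {P : Measure Ω}

theorem mul_add_one_sub_mul_mem {x y ξ : Ω →ₘ[P] ℝ} (hx : x ∈ Mset P) (hy : y ∈ Mset P)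
    (hξ : ∀ᵐ ω ∂P, 0 ≤ ξ ω ∧ ξ ω ≤ 1) : ξ * x + (1 - ξ) * y ∈ Mset P := by
  obtain ⟨mx, hmx, hx⟩ := hx
  obtain ⟨my, hmy, hy⟩ := hy
  refine ⟨min mx my, lt_min hmx hmy, ?_⟩
  filter_upwards [hx, hy, hξ, AEEqFun.coeFn_add (ξ * x) ((1 - ξ) * y),
    AEEqFun.coeFn_mul ξ x, AEEqFun.coeFn_mul (1 - ξ) y, AEEqFun.coeFn_sub 1 ξ,
    AEEqFun.coeFn_one (β := ℝ) (μ := P)]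
    with ω hxω hyω ⟨hξ0, hξ1⟩ hadd hmulx hmuly hsub hone
  simp only [hadd, hmulx, hmuly, hsub, hone, Pi.add_apply, Pi.mul_apply, Pi.sub_apply,
    Pi.one_apply]
  exact convex_Ioi (min mx my) ((min_le_left _ _).trans_lt hxω)
    ((min_le_right _ _).trans_lt hyω) hξ0 (sub_nonneg.2 hξ1) (add_sub_cancel _ _)

theorem exists_nbhd_subset {y : Ω →ₘ[P] ℝ} (hy : y ∈ Mset P) :
    ∃ ε : Ω →ₘ[P] ℝ, (∀ᵐ ω ∂P, 0 < ε ω) ∧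
      ∀ z : Ω →ₘ[P] ℝ, (∀ᵐ ω ∂P, |z ω - y ω| ≤ ε ω) → z ∈ Mset P := by
  obtain ⟨m, hm, hy⟩ := hy
  have hconst := AEEqFun.coeFn_const (μ := P) Ω (m / 2)
  refine ⟨AEEqFun.const Ω (m / 2), ?_, fun z hz => ⟨m / 2, half_pos hm, ?_⟩⟩
  · filter_upwards [hconst] with ω hω
    rw [hω]
    exact half_pos hm
  · filter_upwards [hy, hz, hconst] with ω hyω hzω hω
    rw [hω, Function.const_apply, abs_le] at hzω
    linarith [hzω.1]

theorem notMem_iff {y : Ω →ₘ[P] ℝ} : y ∉ Mset P ↔ ∀ m > 0, P {ω | y ω ≤ m} ≠ 0 := by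
  simp only [Mset, mem_ofPred_eq, ae_iff, not_lt, not_exists, not_and]

theorem notMem_of_ae_le {z : Ω →ₘ[P] ℝ} {f : Ω → ℝ} (hf : ∀ m > 0, P {ω | f ω ≤ m} ≠ 0)
    (hz : ∀ᵐ ω ∂P, z ω ≤ f ω) : z ∉ Mset P :=
  notMem_iff.2 fun m hm => ne_bot_of_le_ne_bot (hf m hm) <|
    measure_mono_ae <| hz.mono fun _ hzω hfω => hzω.trans hfω

theorem exists_nbhd_subset_compl [IsFiniteMeasure P]
    (hnonatomic : ∀ A : Set Ω, MeasurableSet A → 0 < P A →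
      ∃ B ⊆ A, MeasurableSet B ∧ 0 < P B ∧ P B < P A)
    {y : Ω →ₘ[P] ℝ} (hy : y ∉ Mset P) :
    ∃ ε : Ω →ₘ[P] ℝ, (∀ᵐ ω ∂P, 0 < ε ω) ∧
      ∀ z : Ω →ₘ[P] ℝ, (∀ᵐ ω ∂P, |z ω - y ω| ≤ ε ω) → z ∉ Mset P := by
  suffices ∃ ε : Ω → ℝ, Measurable ε ∧ (∀ᵐ ω ∂P, 0 < ε ω) ∧
      ∀ m > 0, P {ω | y ω + ε ω ≤ m} ≠ 0 by
    obtain ⟨ε, hεm, hεpos, hε⟩ := this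
    have hmk := AEEqFun.coeFn_mk (μ := P) ε hεm.aestronglyMeasurable
    refine ⟨AEEqFun.mk ε hεm.aestronglyMeasurable, ?_, fun z hz => notMem_of_ae_le hε ?_⟩
    · filter_upwards [hmk, hεpos] with ω hω hεω
      rwa [hω]
    · filter_upwards [hmk, hz] with ω hω hzω
      rw [hω, abs_le] at hzω
      linarith [hzω.2]
  have hy' := notMem_iff.1 hy
  have hym : Measurable y := y.stronglyMeasurable.measurable
  by_cases hA : P {ω | y ω ≤ 0} = 0
  · refine ⟨fun ω => y ω / 2, hym.div_const 2, ?_, fun m hm hnull => ?_⟩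
    · filter_upwards [measure_eq_zero_iff_ae_notMem.1 hA] with ω hω
      simp only [not_le] at hω
      exact half_pos hω
    · refine hy' (2 * m / 3) (by positivity) (measure_mono_null (fun ω hω => ?_) hnull)
      simp only [mem_ofPred_eq] at hω ⊢
      linarith
  · obtain ⟨ε, hεm, hεpos, hε⟩ := exists_measurable_pos_forall_measure_inter_le_pos hnonatomic
      (measurableSet_le hym measurable_const) (pos_iff_ne_zero.2 hA)
    refine ⟨ε, hεm, ae_of_all _ hεpos, fun m hm => ?_⟩
    refine ((hε m hm).trans_le (measure_mono fun ω hω => ?_)).ne'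
    simp only [mem_inter_iff, mem_ofPred_eq] at hω ⊢
    linarith [hω.1, hω.2]

end Mset

/-- Over a nonatomic probability space, the set
`M = {x ∈ L⁰(𝓕) : ∃ m_x > 0, x > m_x a.e.}` is `L⁰`-convex, open in the locally `L⁰`-convex
topology of `L⁰(𝓕)`, and closed in the locally `L⁰`-convex topology of `L⁰(𝓕)`. -/
theorem stmt8
    {Ω : Type*} [MeasurableSpace Ω] {P : Measure Ω} [IsProbabilityMeasure P]
    -- `(Ω,𝓕,P)` is nonatomic
    (hnonatomic : ∀ A : Set Ω, MeasurableSet A → 0 < P A →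
      ∃ B ⊆ A, MeasurableSet B ∧ 0 < P B ∧ P B < P A) :
    -- `M` is `L⁰`-convex
    (∀ x ∈ Mset P, ∀ y ∈ Mset P, ∀ ξ : Ω →ₘ[P] ℝ,
      (∀ᵐ ω ∂P, 0 ≤ ξ ω ∧ ξ ω ≤ 1) → ξ * x + (1 - ξ) * y ∈ Mset P) ∧
    -- `M` is `𝒯_c`-open
    (∀ y ∈ Mset P, ∃ ε : Ω →ₘ[P] ℝ, (∀ᵐ ω ∂P, 0 < ε ω) ∧
      ∀ z : Ω →ₘ[P] ℝ, (∀ᵐ ω ∂P, |z ω - y ω| ≤ ε ω) → z ∈ Mset P) ∧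
    -- `M` is `𝒯_c`-closed
    (∀ y : Ω →ₘ[P] ℝ, y ∉ Mset P → ∃ ε : Ω →ₘ[P] ℝ, (∀ᵐ ω ∂P, 0 < ε ω) ∧
      ∀ z : Ω →ₘ[P] ℝ, (∀ᵐ ω ∂P, |z ω - y ω| ≤ ε ω) → z ∉ Mset P) :=
  ⟨fun _ hx _ hy _ hξ => Mset.mul_add_one_sub_mul_mem hx hy hξ,
    fun _ hy => Mset.exists_nbhd_subset hy,
    fun _ hy => Mset.exists_nbhd_subset_compl hnonatomic hy⟩
end

section
/- Let (Ω,𝓕,P) be a nonatomic probability space and M = {x ∈ L⁰(𝓕) : there exists a real number m_x > 0 such that x > m_x a.e.}. Then: (1) Ĩ_A·0 ∉ Ĩ_A·M for every A ∈ 𝓕 with P(A) > 0, i.e., there is no y ∈ M with Ĩ_A y = 0; but (2) for every subset U of L⁰(𝓕) which is L⁰-convex, L⁰-absorbent, L⁰-balanced, and contains U(ε) = {ξ ∈ L⁰(𝓕) : |ξ| ≤ ε} for some ε ∈ L⁰₊₊(𝓕), there exists A_U ∈ 𝓕 with P(A_U) > 0 such that Ĩ_{A_U}·U ∩ Ĩ_{A_U}·(M+U)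 ≠ ∅. (This disproves Lemma 2.28 of Filipović–Kupper–Vogelpoth, which asserts that 0 can be strictly separated from M+U by indicator multiplication for all such neighborhoods U.) -/
/-!
(1) holds because `Ĩ_A y = 0` forces `y = 0` a.e. on `A`, while every `y ∈ M` is bounded away
from `0`. For (2), since `ε > 0` a.e., some level set `A = {ε > c}` with `c > 0` has positive
measure. Then `u₁ = Ĩ_A c` lies in the ball `U(ε) ⊆ U`, the constant `m = c` lies in `M`, and
`Ĩ_A u₁ = Ĩ_A (m + 0)` with `0 ∈ U`.
-/

open MeasureTheory Filter Classical

namespace Mset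

variable {Ω : Type*} [MeasurableSpace Ω] {P : Measure Ω}

lemma const_mem {c : ℝ} (hc : 0 < c) : AEEqFun.const Ω c ∈ Mset P :=
  ⟨c / 2, half_pos hc, (AEEqFun.coeFn_const Ω c).mono fun _ h => by
    rw [h]; exact half_lt_self hc⟩

lemma ae_ne_zero {y : Ω →ₘ[P] ℝ} (hy : y ∈ Mset P) : ∀ᵐ ω ∂P, y ω ≠ 0 := by
  obtain ⟨m, hm, hmy⟩ := hy
  exact hmy.mono fun _ h => (hm.trans h).ne'

end Mset

namespace ind

variable {Ω : Type*} [MeasurableSpace Ω] {P : Measure Ω} {A : Set Ω}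

lemma coeFn (hA : MeasurableSet A) : ind P A =ᵐ[P] A.indicator fun _ => (1 : ℝ) := by
  rw [ind, dif_pos hA]
  exact AEEqFun.coeFn_mk _ _

lemma mul_self : ind P A * ind P A = ind P A := by
  unfold ind
  split_ifs
  · rw [AEEqFun.mk_mul_mk]
    congr 1
    exact funext fun ω => by by_cases hω : ω ∈ A <;> simp [hω]
  · rw [AEEqFun.zero_def, AEEqFun.mk_mul_mk]
    congr 1
    exact zero_mul _

lemma measure_eq_zero_of_mul_eq_zero (hA : MeasurableSet A) {y : Ω →ₘ[P] ℝ}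
    (hy : ∀ᵐ ω ∂P, y ω ≠ 0) (h : ind P A * y = 0) : P A = 0 := by
  have hprod : ∀ᵐ ω ∂P, ind P A ω * y ω = 0 := by
    filter_upwards [AEEqFun.coeFn_mul (ind P A) y, AEEqFun.coeFn_zero (β := ℝ) (μ := P)]
      with ω hmul hzero
    rw [← Pi.mul_apply, ← hmul, h, hzero, Pi.zero_apply]
  refine measure_eq_zero_iff_ae_notMem.2 ?_
  filter_upwards [hprod, hy, coeFn hA] with ω hprod hy hind hωA
  rw [hind, Set.indicator_of_mem hωA, one_mul] at hprod
  exact hy hprod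

lemma abs_mul_const_le (hA : MeasurableSet A) {c : ℝ} (hc : 0 ≤ c) {ε : Ω →ₘ[P] ℝ}
    (hε : ∀ᵐ ω ∂P, 0 ≤ ε ω) (hcε : ∀ ω ∈ A, c ≤ ε ω) :
    ∀ᵐ ω ∂P, |(ind P A * AEEqFun.const Ω c : Ω →ₘ[P] ℝ) ω| ≤ ε ω := by
  filter_upwards [AEEqFun.coeFn_mul (ind P A) (AEEqFun.const Ω c), coeFn hA,
    AEEqFun.coeFn_const Ω c, hε] with ω hmul hind hconst hεω
  rw [hmul, Pi.mul_apply, hind, hconst, Function.const_apply]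
  by_cases hωA : ω ∈ A
  · rw [Set.indicator_of_mem hωA, one_mul, abs_of_nonneg hc]
    exact hcε ω hωA
  · rwa [Set.indicator_of_notMem hωA, zero_mul, abs_zero]

end ind

lemma exists_measure_pos_lt_of_ae_pos {Ω : Type*} [MeasurableSpace Ω] {P : Measure Ω}
    [NeZero P] {f : Ω → ℝ} (hf : ∀ᵐ ω ∂P, 0 < f ω) : ∃ c > 0, 0 < P {ω | c < f ω} := by
  by_contra! h
  have hnull : ∀ n : ℕ, ∀ᵐ ω ∂P, ¬ (1 : ℝ) / (n + 1) < f ω := fun n =>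
    measure_eq_zero_iff_ae_notMem.1 (nonpos_iff_eq_zero.1 (h _ Nat.one_div_pos_of_nat))
  have hfalse : ∀ᵐ _ ∂P, False := by
    filter_upwards [hf, ae_all_iff.2 hnull] with ω hpos hle
    obtain ⟨n, hn⟩ := exists_nat_one_div_lt hpos
    exact hle n hn
  exact NeZero.ne P (ae_eq_bot.1 (eventually_false_iff_eq_bot.1 hfalse))

theorem stmt9_general
    {Ω : Type*} [MeasurableSpace Ω] {P : Measure Ω} [IsProbabilityMeasure P] :
    -- (1)
    (∀ A : Set Ω, MeasurableSet A → 0 < P A → ¬∃ y ∈ Mset P, ind P A * y = 0) ∧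
    -- (2)
    (∀ U : Set (Ω →ₘ[P] ℝ),
      -- `U` is `L⁰`-convex
      (∀ x ∈ U, ∀ y ∈ U, ∀ ξ : Ω →ₘ[P] ℝ,
        (∀ᵐ ω ∂P, 0 ≤ ξ ω ∧ ξ ω ≤ 1) → ξ * x + (1 - ξ) * y ∈ U) →
      -- `U` is `L⁰`-absorbent
      (∀ x : Ω →ₘ[P] ℝ, ∃ ξ : Ω →ₘ[P] ℝ, (∀ᵐ ω ∂P, 0 < ξ ω) ∧
        ∀ η : Ω →ₘ[P] ℝ, (∀ᵐ ω ∂P, |η ω| ≤ ξ ω) → η * x ∈ U) →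
      -- `U` is `L⁰`-balanced
      (∀ η : Ω →ₘ[P] ℝ, (∀ᵐ ω ∂P, |η ω| ≤ 1) → ∀ u ∈ U, η * u ∈ U) →
      -- `U` contains a ball `U(ε)` for some `ε ∈ L⁰₊₊(𝓕)`
      (∃ ε : Ω →ₘ[P] ℝ, (∀ᵐ ω ∂P, 0 < ε ω) ∧
        {z : Ω →ₘ[P] ℝ | ∀ᵐ ω ∂P, |z ω| ≤ ε ω} ⊆ U) →
      ∃ A : Set Ω, MeasurableSet A ∧ 0 < P A ∧
        ∃ u₁ ∈ U, ∃ m ∈ Mset P, ∃ u₂ ∈ U, ind P A * u₁ = ind P A * (m + u₂)) := by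
  refine ⟨fun A hA hPA ⟨y, hy, h⟩ =>
    hPA.ne' (ind.measure_eq_zero_of_mul_eq_zero hA (Mset.ae_ne_zero hy) h), ?_⟩
  rintro U - - - ⟨ε, hεpos, hεU⟩
  obtain ⟨c, hc, hPA⟩ := exists_measure_pos_lt_of_ae_pos hεpos
  set A := {ω | c < ε ω}
  have hA : MeasurableSet A := measurableSet_lt measurable_const ε.measurable
  have hεnonneg : ∀ᵐ ω ∂P, 0 ≤ ε ω := hεpos.mono fun _ => le_of_lt
  have hu₁ : ind P A * AEEqFun.const Ω c ∈ U :=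
    hεU (ind.abs_mul_const_le hA hc.le hεnonneg fun _ hω => le_of_lt hω)
  have hzero : (0 : Ω →ₘ[P] ℝ) ∈ U := hεU <| by
    filter_upwards [AEEqFun.coeFn_zero (β := ℝ) (μ := P), hεnonneg] with ω h hω
    rwa [h, Pi.zero_apply, abs_zero]
  refine ⟨A, hA, hPA, _, hu₁, _, Mset.const_mem hc, 0, hzero, ?_⟩
  rw [← mul_assoc, ind.mul_self, add_zero]

/-- Over a nonatomic probability space, with
`M = {x ∈ L⁰(𝓕) : ∃ m_x > 0, x > m_x a.e.}`: (1) `Ĩ_A·0 ∉ Ĩ_A·M` for every `A ∈ 𝓕` with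
`P(A) > 0`; but (2) for every `L⁰`-convex, `L⁰`-absorbent, `L⁰`-balanced `U ⊆ L⁰(𝓕)`
containing some ball `U(ε)`, `ε ∈ L⁰₊₊(𝓕)`, there is `A_U ∈ 𝓕` with `P(A_U) > 0` and
`Ĩ_{A_U}·U ∩ Ĩ_{A_U}·(M+U) ≠ ∅`.  (A counterexample to Lemma 2.28 of
Filipović–Kupper–Vogelpoth.) -/
theorem stmt9
    {Ω : Type*} [MeasurableSpace Ω] {P : Measure Ω} [IsProbabilityMeasure P]
    -- `(Ω,𝓕,P)` is nonatomic
    (hnonatomic : ∀ A : Set Ω, MeasurableSet A → 0 < P A →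
      ∃ B ⊆ A, MeasurableSet B ∧ 0 < P B ∧ P B < P A) :
    -- (1)
    (∀ A : Set Ω, MeasurableSet A → 0 < P A → ¬∃ y ∈ Mset P, ind P A * y = 0) ∧
    -- (2)
    (∀ U : Set (Ω →ₘ[P] ℝ),
      -- `U` is `L⁰`-convex
      (∀ x ∈ U, ∀ y ∈ U, ∀ ξ : Ω →ₘ[P] ℝ,
        (∀ᵐ ω ∂P, 0 ≤ ξ ω ∧ ξ ω ≤ 1) → ξ * x + (1 - ξ) * y ∈ U) →
      -- `U` is `L⁰`-absorbent
      (∀ x : Ω →ₘ[P] ℝ, ∃ ξ : Ω →ₘ[P] ℝ, (∀ᵐ ω ∂P, 0 < ξ ω) ∧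
        ∀ η : Ω →ₘ[P] ℝ, (∀ᵐ ω ∂P, |η ω| ≤ ξ ω) → η * x ∈ U) →
      -- `U` is `L⁰`-balanced
      (∀ η : Ω →ₘ[P] ℝ, (∀ᵐ ω ∂P, |η ω| ≤ 1) → ∀ u ∈ U, η * u ∈ U) →
      -- `U` contains a ball `U(ε)` for some `ε ∈ L⁰₊₊(𝓕)`
      (∃ ε : Ω →ₘ[P] ℝ, (∀ᵐ ω ∂P, 0 < ε ω) ∧
        {z : Ω →ₘ[P] ℝ | ∀ᵐ ω ∂P, |z ω| ≤ ε ω} ⊆ U) →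
      ∃ A : Set Ω, MeasurableSet A ∧ 0 < P A ∧
        ∃ u₁ ∈ U, ∃ m ∈ Mset P, ∃ u₂ ∈ U, ind P A * u₁ = ind P A * (m + u₂)) :=
  stmt9_general
end

section
/- Let (E,𝒫) be a random locally convex module over K with base (Ω,𝓕,P) and f : E → L⁰(𝓕,K) a K-linear map. Then the following are equivalent: (i) f is a.s. bounded of type I, i.e., there exist ξ ∈ L⁰₊(𝓕) and a finite Q ⊆ 𝒫 with |f(x)| ≤ ξ·‖x‖_Q a.e. for all x ∈ E; (ii) f is L⁰(𝓕,K)-linear and continuous from E with the locally L⁰-convex topology to L⁰(𝓕,K) with its locally L⁰-convex topology, i.e., for every ε ∈ L⁰₊₊(𝓕) there exist δ ∈ L⁰₊₊(𝓕) and a finite Q ⊆ 𝒫 such that ‖x‖_Q ≤ δ a.e. implies |f(x)| ≤ ε a.e. (In the paper's notation: E*_I = E*_c.) -/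
open MeasureTheory Filter

/-!
(i) ⇒ (ii): for a constant `c`, `f ((η - c) • x) = f (η • x) - c * f x` is bounded by
`ξ * |η - c| * ‖x‖_Q`; letting `c` run through a countable dense subset of `K` forces
`f (η • x) = η * f x` a.e., and `δ = ε / (1 + |ξ|)` witnesses continuity.
(ii) ⇒ (i): if the `δ`-ball of `‖·‖_Q` is mapped into the `ε`-ball, rescaling `x` by
`δ / (‖x‖_Q + c)` gives `δ * |f x| ≤ ε * (‖x‖_Q + c)`, and `c → 0` yields `ξ = ε / δ`.
-/

lemma finSup_nonneg {ι : Type*} (Q : Finset ι) (g : ι → ℝ) : 0 ≤ finSup Q g :=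
  NNReal.coe_nonneg _

lemma finSup_congr {ι : Type*} {Q : Finset ι} {g h : ι → ℝ} (H : ∀ i ∈ Q, g i = h i) :
    finSup Q g = finSup Q h := by
  unfold finSup
  rw [Finset.sup_congr rfl fun i hi => by rw [H i hi]]

lemma finSup_const_mul {ι : Type*} (Q : Finset ι) (g : ι → ℝ) {c : ℝ} (hc : 0 ≤ c) :
    finSup Q (fun i => c * g i) = c * finSup Q g := by
  have : (Q.sup fun i => (c * g i).toNNReal) = c.toNNReal * Q.sup fun i => (g i).toNNReal := by
    rw [NNReal.mul_finset_sup]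
    exact Finset.sup_congr rfl fun i _ => Real.toNNReal_mul hc
  rw [finSup, finSup, this, NNReal.coe_mul, Real.coe_toNNReal c hc]

lemma aemeasurable_finSup {ι Ω : Type*} [MeasurableSpace Ω] {μ : Measure Ω} (Q : Finset ι)
    {g : ι → Ω → ℝ} (hg : ∀ i ∈ Q, AEMeasurable (g i) μ) :
    AEMeasurable (fun ω => finSup Q fun i => g i ω) μ := by
  have : AEMeasurable (Q.sup fun i ω => (g i ω).toNNReal) μ :=
    Finset.sup_induction (p := fun F => AEMeasurable F μ) aemeasurable_const
      (fun _ h₁ _ h₂ => h₁.sup h₂) fun i hi => (hg i hi).real_toNNReal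
  simpa only [finSup, Finset.sup_apply] using this.coe_nnreal_real

lemma eq_mul_of_forall_norm_sub_mul_le {R ι : Type*} [NormedRing R] {u : ι → R}
    (hu : DenseRange u) {a b c : R} {C : ℝ} (h : ∀ n, ‖b - u n * a‖ ≤ C * ‖c - u n‖) :
    b = c * a := by
  have key : ‖b - c * a‖ ≤ C * ‖c - c‖ :=
    hu.induction_on (p := fun z => ‖b - z * a‖ ≤ C * ‖c - z‖) c
      (isClosed_le (by fun_prop) (by fun_prop)) h
  rwa [sub_self, norm_zero, mul_zero, norm_le_zero_iff, sub_eq_zero] at key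

section L0Module

variable {Ω K E : Type*} [MeasurableSpace Ω] {P : Measure Ω} [RCLike K]

lemma exists_delta_of_ae_norm_le_mul {N : E → Ω → ℝ} {f : E → Ω →ₘ[P] K} {ξ : Ω →ₘ[P] ℝ}
    (hξ : ∀ᵐ ω ∂P, 0 ≤ ξ ω) (hbd : ∀ x, ∀ᵐ ω ∂P, ‖f x ω‖ ≤ ξ ω * N x ω)
    (ε : Ω →ₘ[P] ℝ) (hε : ∀ᵐ ω ∂P, 0 < ε ω) :
    ∃ δ : Ω →ₘ[P] ℝ, (∀ᵐ ω ∂P, 0 < δ ω) ∧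
      ∀ x, (∀ᵐ ω ∂P, N x ω ≤ δ ω) → ∀ᵐ ω ∂P, ‖f x ω‖ ≤ ε ω := by
  have hmeas : AEStronglyMeasurable (fun ω => ε ω / (1 + |ξ ω|)) P :=
    (ε.aestronglyMeasurable.aemeasurable.div
      (ξ.aestronglyMeasurable.aemeasurable.abs.const_add 1)).aestronglyMeasurable
  refine ⟨AEEqFun.mk _ hmeas, ?_, fun x hx => ?_⟩
  · filter_upwards [AEEqFun.coeFn_mk _ hmeas, hε] with ω hδ hεω
    rw [hδ]
    positivity
  · filter_upwards [AEEqFun.coeFn_mk _ hmeas, hx, hbd x, hξ, hε] with ω hδ hxω hbdω hξω hεω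
    rw [hδ] at hxω
    calc ‖f x ω‖ ≤ ξ ω * N x ω := hbdω
      _ ≤ ξ ω * (ε ω / (1 + |ξ ω|)) := mul_le_mul_of_nonneg_left hxω hξω
      _ ≤ ε ω := by
        rw [abs_of_nonneg hξω, mul_div_assoc', div_le_iff₀ (by positivity)]
        nlinarith

variable [SMul (Ω →ₘ[P] K) E]

lemma ae_finSup_smul {ι : Type*} {p : ι → E → Ω →ₘ[P] ℝ}
    (hp_hom : ∀ i (ξ : Ω →ₘ[P] K) (x : E), ∀ᵐ ω ∂P, p i (ξ • x) ω = ‖ξ ω‖ * p i x ω)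
    (Q : Finset ι) (η : Ω →ₘ[P] K) (x : E) :
    ∀ᵐ ω ∂P, finSup Q (fun i => p i (η • x) ω) = ‖η ω‖ * finSup Q (fun i => p i x ω) := by
  filter_upwards [(ae_ball_iff Q.countable_toSet).2 fun i _ => hp_hom i η x] with ω hω
  rw [finSup_congr hω, finSup_const_mul Q _ (norm_nonneg (η ω))]

variable {N : E → Ω → ℝ}

lemma ae_mul_norm_le_mul_add (hN : ∀ (η : Ω →ₘ[P] K) x, ∀ᵐ ω ∂P, N (η • x) ω = ‖η ω‖ * N x ω)
    (hN_meas : ∀ x, AEMeasurable (N x) P) (hN_nonneg : ∀ x ω, 0 ≤ N x ω)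
    {f : E → Ω →ₘ[P] K} (hlin : ∀ (η : Ω →ₘ[P] K) x, f (η • x) = η * f x)
    {ε δ : Ω →ₘ[P] ℝ} (hδ : ∀ᵐ ω ∂P, 0 < δ ω)
    (hcont : ∀ x, (∀ᵐ ω ∂P, N x ω ≤ δ ω) → ∀ᵐ ω ∂P, ‖f x ω‖ ≤ ε ω)
    (x : E) {c : ℝ} (hc : 0 < c) :
    ∀ᵐ ω ∂P, δ ω * ‖f x ω‖ ≤ ε ω * (N x ω + c) := by
  have hpos (ω : Ω) : 0 < N x ω + c := by linarith [hN_nonneg x ω]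
  have hmeas : AEStronglyMeasurable (fun ω => ((δ ω / (N x ω + c) : ℝ) : K)) P :=
    (RCLike.measurable_ofReal.comp_aemeasurable (δ.aestronglyMeasurable.aemeasurable.div
      ((hN_meas x).add_const c))).aestronglyMeasurable
  set η : Ω →ₘ[P] K := AEEqFun.mk _ hmeas
  have hη : ∀ᵐ ω ∂P, ‖η ω‖ = δ ω / (N x ω + c) := by
    filter_upwards [AEEqFun.coeFn_mk _ hmeas, hδ] with ω hηω hδω
    rw [hηω, RCLike.norm_ofReal, abs_of_pos (div_pos hδω (hpos ω))]
  have hsmall : ∀ᵐ ω ∂P, N (η • x) ω ≤ δ ω := by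
    filter_upwards [hN η x, hη, hδ] with ω hNω hηω hδω
    rw [hNω, hηω, div_mul_eq_mul_div, div_le_iff₀ (hpos ω)]
    exact mul_le_mul_of_nonneg_left (by linarith) hδω.le
  filter_upwards [hcont _ hsmall, hη, AEEqFun.coeFn_mul η (f x)] with ω hfω hηω hmul
  rwa [hlin, hmul, Pi.mul_apply, norm_mul, hηω, div_mul_eq_mul_div, div_le_iff₀ (hpos ω)] at hfω

lemma exists_ae_norm_le_mul_of_delta
    (hN : ∀ (η : Ω →ₘ[P] K) x, ∀ᵐ ω ∂P, N (η • x) ω = ‖η ω‖ * N x ω)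
    (hN_meas : ∀ x, AEMeasurable (N x) P) (hN_nonneg : ∀ x ω, 0 ≤ N x ω)
    {f : E → Ω →ₘ[P] K} (hlin : ∀ (η : Ω →ₘ[P] K) x, f (η • x) = η * f x)
    {ε δ : Ω →ₘ[P] ℝ} (hε : ∀ᵐ ω ∂P, 0 < ε ω) (hδ : ∀ᵐ ω ∂P, 0 < δ ω)
    (hcont : ∀ x, (∀ᵐ ω ∂P, N x ω ≤ δ ω) → ∀ᵐ ω ∂P, ‖f x ω‖ ≤ ε ω) :
    ∃ ξ : Ω →ₘ[P] ℝ, (∀ᵐ ω ∂P, 0 ≤ ξ ω) ∧ ∀ x, ∀ᵐ ω ∂P, ‖f x ω‖ ≤ ξ ω * N x ω := by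
  have hmeas : AEStronglyMeasurable (fun ω => ε ω / δ ω) P :=
    (ε.aestronglyMeasurable.aemeasurable.div
      δ.aestronglyMeasurable.aemeasurable).aestronglyMeasurable
  refine ⟨AEEqFun.mk _ hmeas, ?_, fun x => ?_⟩
  · filter_upwards [AEEqFun.coeFn_mk _ hmeas, hε, hδ] with ω hξω hεω hδω
    rw [hξω]
    positivity
  have hall := ae_all_iff.2 fun n : ℕ =>
    ae_mul_norm_le_mul_add hN hN_meas hN_nonneg hlin hδ hcont x (c := 1 / (n + 1)) (by positivity)
  filter_upwards [hall, AEEqFun.coeFn_mk _ hmeas, hδ] with ω hω hξω hδω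
  have hlim : Tendsto (fun n : ℕ => ε ω * (N x ω + 1 / (n + 1))) atTop
      (nhds (ε ω * N x ω)) := by
    simpa using (tendsto_one_div_add_atTop_nhds_zero_nat.const_add (N x ω)).const_mul (ε ω)
  rw [hξω, div_mul_eq_mul_div, le_div_iff₀ hδω, mul_comm]
  exact ge_of_tendsto' hlim hω

variable [AddCommGroup E]

lemma map_smul_of_ae_norm_le_mul
    (hN : ∀ (η : Ω →ₘ[P] K) x, ∀ᵐ ω ∂P, N (η • x) ω = ‖η ω‖ * N x ω)
    (hmodb : ∀ (ξ η : Ω →ₘ[P] K) (x : E), (ξ + η) • x = ξ • x + η • x)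
    {f : E → Ω →ₘ[P] K} (hf_add : ∀ x y, f (x + y) = f x + f y)
    (hf_smulK : ∀ (c : K) (x : E),
      f ((AEEqFun.const Ω c : Ω →ₘ[P] K) • x) = (AEEqFun.const Ω c : Ω →ₘ[P] K) * f x)
    {ξ : Ω →ₘ[P] ℝ} (hbd : ∀ x, ∀ᵐ ω ∂P, ‖f x ω‖ ≤ ξ ω * N x ω)
    (η : Ω →ₘ[P] K) (x : E) : f (η • x) = η * f x := by
  have hsub (c : K) :
      f ((η - AEEqFun.const Ω c) • x) = f (η • x) - AEEqFun.const Ω c * f x := by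
    rw [eq_sub_iff_add_eq, ← hf_smulK, ← hf_add, ← hmodb, sub_add_cancel]
  have hclose (c : K) :
      ∀ᵐ ω ∂P, ‖f (η • x) ω - c * f x ω‖ ≤ ξ ω * N x ω * ‖η ω - c‖ := by
    filter_upwards [hbd ((η - AEEqFun.const Ω c) • x), hN (η - AEEqFun.const Ω c) x,
      AEEqFun.coeFn_sub η (AEEqFun.const Ω c), AEEqFun.coeFn_const Ω c (μ := P),
      AEEqFun.coeFn_sub (f (η • x)) (AEEqFun.const Ω c * f x),
      AEEqFun.coeFn_mul (AEEqFun.const Ω c) (f x)] with ω h₁ h₂ h₃ h₄ h₅ h₆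
    rw [hsub, h₅, h₂, h₃] at h₁
    simp only [Pi.sub_apply, h₆, Pi.mul_apply, h₄, Function.const_apply] at h₁
    linarith
  refine AEEqFun.ext ?_
  filter_upwards [ae_all_iff.2 fun n => hclose (TopologicalSpace.denseSeq K n),
    AEEqFun.coeFn_mul η (f x)] with ω hω hmul
  rw [hmul, Pi.mul_apply]
  exact eq_mul_of_forall_norm_sub_mul_le (TopologicalSpace.denseRange_denseSeq K) hω

end L0Module

theorem stmt11_general
    {Ω K ι E : Type*} [MeasurableSpace Ω] {P : Measure Ω}
    [RCLike K] [AddCommGroup E] [SMul (Ω →ₘ[P] K) E]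
    -- `E` is a left module over `L⁰(𝓕,K)`
    (hmodb : ∀ (ξ η : Ω →ₘ[P] K) (x : E), (ξ + η) • x = ξ • x + η • x)
    -- `𝒫 = {p i : i ∈ ι}` is a separating family of `L⁰`-seminorms on `E`
    (p : ι → E → Ω →ₘ[P] ℝ)
    (hp_hom : ∀ i (ξ : Ω →ₘ[P] K) (x : E), ∀ᵐ ω ∂P, p i (ξ • x) ω = ‖ξ ω‖ * p i x ω)
    -- `f` is a `K`-linear map into `L⁰(𝓕,K)`
    (f : E → Ω →ₘ[P] K)
    (hf_add : ∀ x y, f (x + y) = f x + f y)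
    (hf_smulK : ∀ (c : K) (x : E),
      f ((AEEqFun.const Ω c : Ω →ₘ[P] K) • x) = (AEEqFun.const Ω c : Ω →ₘ[P] K) * f x) :
    -- (i) `f` is a.s. bounded of type I …
    (∃ (ξ : Ω →ₘ[P] ℝ) (Q : Finset ι), (∀ᵐ ω ∂P, 0 ≤ ξ ω) ∧
      ∀ x, ∀ᵐ ω ∂P, ‖f x ω‖ ≤ ξ ω * finSup Q (fun i => p i x ω))
    ↔
    -- (ii) … iff `f` is `L⁰(𝓕,K)`-linear and `𝒯_c`-continuous
    ((∀ (ξ : Ω →ₘ[P] K) (x : E), f (ξ • x) = ξ * f x) ∧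
      ∀ ε : Ω →ₘ[P] ℝ, (∀ᵐ ω ∂P, 0 < ε ω) →
        ∃ (δ : Ω →ₘ[P] ℝ) (Q : Finset ι), (∀ᵐ ω ∂P, 0 < δ ω) ∧
          ∀ x, (∀ᵐ ω ∂P, finSup Q (fun i => p i x ω) ≤ δ ω) →
            ∀ᵐ ω ∂P, ‖f x ω‖ ≤ ε ω) := by
  constructor
  · rintro ⟨ξ, Q, hξ, hbd⟩
    refine ⟨map_smul_of_ae_norm_le_mul (ae_finSup_smul hp_hom Q) hmodb hf_add hf_smulK hbd,
      fun ε hε => ?_⟩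
    obtain ⟨δ, hδ, hδε⟩ := exists_delta_of_ae_norm_le_mul hξ hbd ε hε
    exact ⟨δ, Q, hδ, hδε⟩
  · rintro ⟨hlin, hcont⟩
    have hone : ∀ᵐ ω ∂P, 0 < (1 : Ω →ₘ[P] ℝ) ω := by
      filter_upwards [AEEqFun.coeFn_one (β := ℝ) (μ := P)] with ω hω
      simp [hω]
    obtain ⟨δ, Q, hδ, hδ1⟩ := hcont 1 hone
    obtain ⟨ξ, hξ, hbd⟩ := exists_ae_norm_le_mul_of_delta (ae_finSup_smul hp_hom Q)
      (fun x => aemeasurable_finSup Q fun i _ => (p i x).aestronglyMeasurable.aemeasurable)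
      (fun x ω => finSup_nonneg Q _) hlin hone hδ hδ1
    exact ⟨ξ, Q, hξ, hbd⟩

/-- Let `(E,𝒫)` be a random locally convex module over `K` with base
`(Ω,𝓕,P)` and `f : E → L⁰(𝓕,K)` a `K`-linear map.  Then `f` is a.s. bounded of type I iff
`f` is `L⁰(𝓕,K)`-linear and continuous for the locally `L⁰`-convex topologies
(i.e. `E*_I = E*_c`). -/
theorem stmt11
    {Ω K ι E : Type*} [MeasurableSpace Ω] {P : Measure Ω} [IsProbabilityMeasure P]
    [RCLike K] [AddCommGroup E] [SMul (Ω →ₘ[P] K) E]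
    -- `E` is a left module over `L⁰(𝓕,K)`
    (hmoda : ∀ (ξ : Ω →ₘ[P] K) (x y : E), ξ • (x + y) = ξ • x + ξ • y)
    (hmodb : ∀ (ξ η : Ω →ₘ[P] K) (x : E), (ξ + η) • x = ξ • x + η • x)
    (hmodc : ∀ (ξ η : Ω →ₘ[P] K) (x : E), (ξ * η) • x = ξ • (η • x))
    (hmodd : ∀ x : E, (1 : Ω →ₘ[P] K) • x = x)
    -- `𝒫 = {p i : i ∈ ι}` is a separating family of `L⁰`-seminorms on `E`
    (p : ι → E → Ω →ₘ[P] ℝ)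
    (hp_pos : ∀ i x, ∀ᵐ ω ∂P, 0 ≤ p i x ω)
    (hp_tri : ∀ i x y, ∀ᵐ ω ∂P, p i (x + y) ω ≤ p i x ω + p i y ω)
    (hp_hom : ∀ i (ξ : Ω →ₘ[P] K) (x : E), ∀ᵐ ω ∂P, p i (ξ • x) ω = ‖ξ ω‖ * p i x ω)
    (hp_sep : ∀ x : E, (∀ i, ∀ᵐ ω ∂P, p i x ω = 0) → x = 0)
    -- `f` is a `K`-linear map into `L⁰(𝓕,K)`
    (f : E → Ω →ₘ[P] K)
    (hf_add : ∀ x y, f (x + y) = f x + f y)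
    (hf_smulK : ∀ (c : K) (x : E),
      f ((AEEqFun.const Ω c : Ω →ₘ[P] K) • x) = (AEEqFun.const Ω c : Ω →ₘ[P] K) * f x) :
    -- (i) `f` is a.s. bounded of type I …
    (∃ (ξ : Ω →ₘ[P] ℝ) (Q : Finset ι), (∀ᵐ ω ∂P, 0 ≤ ξ ω) ∧
      ∀ x, ∀ᵐ ω ∂P, ‖f x ω‖ ≤ ξ ω * finSup Q (fun i => p i x ω))
    ↔
    -- (ii) … iff `f` is `L⁰(𝓕,K)`-linear and `𝒯_c`-continuous
    ((∀ (ξ : Ω →ₘ[P] K) (x : E), f (ξ • x) = ξ * f x) ∧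
      ∀ ε : Ω →ₘ[P] ℝ, (∀ᵐ ω ∂P, 0 < ε ω) →
        ∃ (δ : Ω →ₘ[P] ℝ) (Q : Finset ι), (∀ᵐ ω ∂P, 0 < δ ω) ∧
          ∀ x, (∀ᵐ ω ∂P, finSup Q (fun i => p i x ω) ≤ δ ω) →
            ∀ᵐ ω ∂P, ‖f x ω‖ ≤ ε ω) :=
  stmt11_general hmodb p hp_hom f hf_add hf_smulK
end
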